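/- arXiv:math/0304134 — 7 statements merged into one kernel-verified Lean document; each statement's English description precedes it below -/
import Mathlib

section
/- Let (W_t)_{t ≥ 0} be a standard one-dimensional Brownian motion. For every H ∈ (0,1) there exists γ > 0 such that, almost surely, sup_{s,t ≥ 0, s ≠ t} Γ(s,t)^γ · |W_s − W_t| / (|s−t|^{(1−H)/2} (1 + s + t)^{1/2}) < ∞, where Γ(s,t) = (1 + s + t)² / |s−t|. Moreover this supremum, as a random variable, has finite moments of all orders. -/
/-!
Write `X = 1 + s + t`. The weighted quotient equals `X ^ (-β) * |u s - u t| / |s - t| ^ α` with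
`α = γ + (1 - H) / 2` and `β = 1 / 2 - 2γ`. If `2 ^ n ≤ X < 2 ^ (n + 1)`, both points lie in
`[0, 2 ^ (n + 1)]`, where Lévy's dyadic chaining bounds the `α`-Hölder quotient of a continuous path
by a constant times the supremum of its normalised increments over the dyadic cells. So the weighted
supremum is dominated by `B = sup_n 2 ^ (-n β) * (dyadic α-Hölder seminorm on [0, 2 ^ n])`.
Gaussian increments satisfy `E |W t - W s| ^ (2p) = c_p |t - s| ^ p`; bounding the suprema in `B`
by sums over all cells and all scales turns `E B ^ (2p)` into a double geometric series, which
converges once `p (1 - 2α) > 1` and `α + β > 1 / 2`. Smaller moments follow on a probability space.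
-/

open MeasureTheory Set
open scoped ENNReal NNReal

/-- The weighted Hölder-type supremum `sup_{s,t ≥ 0, s ≠ t} Γ(s,t)^γ |u(s)-u(t)| /
(|s-t|^{(1-H)/2} (1+s+t)^{1/2})`, with `Γ(s,t) = (1+s+t)²/|s-t|`, as an extended
nonnegative real. -/
noncomputable def weightedHolderSup (H γ : ℝ) (u : ℝ → ℝ) : ℝ≥0∞ :=
  ⨆ p : {q : ℝ × ℝ // 0 ≤ q.1 ∧ 0 ≤ q.2 ∧ q.1 ≠ q.2},
    ENNReal.ofReal (((1 + p.1.1 + p.1.2) ^ 2 / |p.1.1 - p.1.2|) ^ γ *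
      |u p.1.1 - u p.1.2| /
      (|p.1.1 - p.1.2| ^ ((1 - H) / 2) * (1 + p.1.1 + p.1.2) ^ ((1 : ℝ) / 2)))

open Filter Topology ProbabilityTheory

lemma Nat.floor_two_mul_eq_or {x : ℝ} (hx : 0 ≤ x) :
    ⌊2 * x⌋₊ = 2 * ⌊x⌋₊ ∨ ⌊2 * x⌋₊ = 2 * ⌊x⌋₊ + 1 := by
  have hlow : 2 * ⌊x⌋₊ ≤ ⌊2 * x⌋₊ :=
    Nat.le_floor (by push_cast; linarith [Nat.floor_le hx])
  have hupp : ⌊2 * x⌋₊ < 2 * ⌊x⌋₊ + 2 :=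
    (Nat.floor_lt (by positivity)).mpr (by push_cast; linarith [Nat.lt_floor_add_one x])
  omega

lemma div_two_pow_rpow {T : ℝ} (hT : 0 ≤ T) (α : ℝ) (j : ℕ) :
    (T / 2 ^ j) ^ α = T ^ α * ((2 : ℝ) ^ (-α)) ^ j := by
  rw [Real.div_rpow hT (by positivity), ← Real.rpow_natCast_mul zero_le_two,
    ← Real.rpow_mul_natCast zero_le_two, div_eq_mul_inv, ← Real.rpow_neg zero_le_two]
  ring_nf

lemma two_pow_mul_ofReal_div_two_pow_rpow {T : ℝ} (hT : 0 ≤ T) (e : ℝ) (j : ℕ) :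
    2 ^ j * ENNReal.ofReal ((T / 2 ^ j) ^ e) =
      ENNReal.ofReal (T ^ e) * ENNReal.ofReal (2 ^ (1 - e)) ^ j := by
  rw [sub_eq_add_neg, Real.rpow_add zero_lt_two, Real.rpow_one, ← ENNReal.ofReal_ofNat 2,
    ← ENNReal.ofReal_pow zero_le_two, ← ENNReal.ofReal_pow (by positivity),
    ← ENNReal.ofReal_mul (by positivity), ← ENNReal.ofReal_mul (by positivity),
    div_two_pow_rpow hT, mul_left_comm, ← mul_pow]

lemma ofReal_two_pow_rpow (n : ℕ) (e : ℝ) :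
    ENNReal.ofReal (((2 : ℝ) ^ n) ^ e) = ENNReal.ofReal (2 ^ e) ^ n := by
  rw [← Real.rpow_pow_comm zero_le_two, ENNReal.ofReal_pow (by positivity)]

noncomputable def dyadicFloor (T : ℝ) (j : ℕ) (s : ℝ) : ℝ :=
  ⌊s / (T / 2 ^ j)⌋₊ * (T / 2 ^ j)

def DyadicHolderBound (f : ℝ → ℝ) (T α a : ℝ) : Prop :=
  ∀ j k : ℕ, k < 2 ^ j → |f ((k + 1) * (T / 2 ^ j)) - f (k * (T / 2 ^ j))| ≤ a * (T / 2 ^ j) ^ α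

noncomputable def holderChainingConst (α : ℝ) : ℝ := 3 * 2 ^ α / (1 - 2 ^ (-α))

section DyadicChaining

variable {f : ℝ → ℝ} {T α a s t : ℝ}

lemma dyadicFloor_le (hT : 0 < T) (hs : 0 ≤ s) (j : ℕ) : dyadicFloor T j s ≤ s := by
  have hδ : 0 < T / 2 ^ j := by positivity
  calc dyadicFloor T j s ≤ s / (T / 2 ^ j) * (T / 2 ^ j) :=
        mul_le_mul_of_nonneg_right (Nat.floor_le (by positivity)) hδ.le
    _ = s := div_mul_cancel₀ s hδ.ne'

lemma lt_dyadicFloor_add (hT : 0 < T) (s : ℝ) (j : ℕ) :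
    s < dyadicFloor T j s + T / 2 ^ j := by
  have hδ : 0 < T / 2 ^ j := by positivity
  calc s = s / (T / 2 ^ j) * (T / 2 ^ j) := (div_mul_cancel₀ s hδ.ne').symm
    _ < (⌊s / (T / 2 ^ j)⌋₊ + 1) * (T / 2 ^ j) :=
        mul_lt_mul_of_pos_right (Nat.lt_floor_add_one _) hδ
    _ = dyadicFloor T j s + T / 2 ^ j := by rw [dyadicFloor]; ring

lemma tendsto_dyadicFloor (hT : 0 < T) (hs : 0 ≤ s) :
    Tendsto (fun j => dyadicFloor T j s) atTop (𝓝 s) := by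
  have hmesh : Tendsto (fun j : ℕ => T / 2 ^ j) atTop (𝓝 0) :=
    tendsto_const_nhds.div_atTop (tendsto_pow_atTop_atTop_of_one_lt one_lt_two)
  refine tendsto_of_tendsto_of_tendsto_of_le_of_le (by simpa using tendsto_const_nhds.sub hmesh)
    tendsto_const_nhds (fun j => ?_) (dyadicFloor_le hT hs)
  linarith [lt_dyadicFloor_add hT s j]

lemma DyadicHolderBound.abs_dyadicFloor_succ_sub_le (hξ : DyadicHolderBound f T α a)
    (hT : 0 < T) (ha : 0 ≤ a) (hs : s ∈ Icc 0 T) (j : ℕ) :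
    |f (dyadicFloor T (j + 1) s) - f (dyadicFloor T j s)| ≤ a * (T / 2 ^ (j + 1)) ^ α := by
  have hδ : 0 < T / 2 ^ (j + 1) := by positivity
  have hδj : T / 2 ^ j = 2 * (T / 2 ^ (j + 1)) := by rw [pow_succ]; field_simp
  have hx : 0 ≤ s / (T / 2 ^ j) := by have := hs.1; positivity
  have hx2 : s / (T / 2 ^ (j + 1)) = 2 * (s / (T / 2 ^ j)) := by rw [hδj]; field_simp
  have hfloor : dyadicFloor T j s = (2 * ⌊s / (T / 2 ^ j)⌋₊ : ℕ) * (T / 2 ^ (j + 1)) := by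
    rw [dyadicFloor, hδj]; push_cast; ring
  have hsT : s / (T / 2 ^ (j + 1)) ≤ 2 ^ (j + 1) := by
    rw [div_le_iff₀ hδ]; field_simp; exact hs.2
  generalize s / (T / 2 ^ j) = x at *
  rcases Nat.floor_two_mul_eq_or hx with h | h
  · have : dyadicFloor T (j + 1) s = dyadicFloor T j s := by
      rw [hfloor, dyadicFloor, hx2, h]
    rw [this, sub_self, abs_zero]
    positivity
  · have hk : 2 * ⌊x⌋₊ < 2 ^ (j + 1) := by
      have h1 : ((2 * ⌊x⌋₊ + 1 : ℕ) : ℝ) ≤ 2 * x := h ▸ Nat.floor_le (by positivity)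
      exact_mod_cast (show ((2 * ⌊x⌋₊ : ℕ) : ℝ) < (2 ^ (j + 1) : ℕ) by
        push_cast at h1 ⊢; linarith)
    have : dyadicFloor T (j + 1) s = ((2 * ⌊x⌋₊ : ℕ) + 1) * (T / 2 ^ (j + 1)) := by
      rw [dyadicFloor, hx2, h]; push_cast; ring
    rw [this, hfloor]
    exact hξ (j + 1) _ hk

lemma DyadicHolderBound.abs_dyadicFloor_sub_le (hξ : DyadicHolderBound f T α a)
    (hT : 0 < T) (hα : 0 < α) (ha : 0 ≤ a) (hf : ContinuousOn f (Icc 0 T))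
    (hs : s ∈ Icc 0 T) (m : ℕ) :
    |f (dyadicFloor T m s) - f s| ≤ a * (T / 2 ^ m) ^ α / (1 - 2 ^ (-α)) := by
  have hr : (2 : ℝ) ^ (-α) < 1 := Real.rpow_lt_one_of_one_lt_of_neg one_lt_two (by linarith)
  have hstep : ∀ j, dist (f (dyadicFloor T j s)) (f (dyadicFloor T (j + 1) s)) ≤
      a * T ^ α * ((2 : ℝ) ^ (-α)) ^ j := fun j => by
    rw [dist_comm, Real.dist_eq, mul_assoc, ← div_two_pow_rpow hT.le]
    refine (hξ.abs_dyadicFloor_succ_sub_le hT ha hs j).trans (mul_le_mul_of_nonneg_left ?_ ha)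
    gcongr <;> norm_num
  have hlim : Tendsto (fun j => f (dyadicFloor T j s)) atTop (𝓝 (f s)) :=
    (hf s hs).tendsto.comp <| tendsto_nhdsWithin_iff.mpr ⟨tendsto_dyadicFloor hT hs.1,
      Eventually.of_forall fun j =>
        ⟨by rw [dyadicFloor]; positivity, (dyadicFloor_le hT hs.1 j).trans hs.2⟩⟩
  have := dist_le_of_le_geometric_of_tendsto _ _ hr hstep hlim m
  rwa [Real.dist_eq, mul_assoc, ← div_two_pow_rpow hT.le] at this

lemma DyadicHolderBound.abs_dyadicFloor_sub_dyadicFloor_le (hξ : DyadicHolderBound f T α a)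
    (hT : 0 < T) (ha : 0 ≤ a) (hs : 0 ≤ s) (ht : t ≤ T) (hst : s ≤ t) {m : ℕ}
    (hm : t - s ≤ T / 2 ^ m) :
    |f (dyadicFloor T m t) - f (dyadicFloor T m s)| ≤ a * (T / 2 ^ m) ^ α := by
  have hδ : 0 < T / 2 ^ m := by positivity
  have ht0 : 0 ≤ t := hs.trans hst
  have hmono : ⌊s / (T / 2 ^ m)⌋₊ ≤ ⌊t / (T / 2 ^ m)⌋₊ := Nat.floor_mono (by gcongr)
  have hnear : ⌊t / (T / 2 ^ m)⌋₊ < ⌊s / (T / 2 ^ m)⌋₊ + 2 := by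
    refine (Nat.floor_lt (by positivity)).2 ?_
    have : t / (T / 2 ^ m) ≤ s / (T / 2 ^ m) + 1 := by
      rw [← sub_le_iff_le_add', ← sub_div, div_le_one hδ]; exact hm
    push_cast; linarith [Nat.lt_floor_add_one (s / (T / 2 ^ m))]
  rcases hmono.eq_or_lt with h | h
  · rw [dyadicFloor, dyadicFloor, ← h, sub_self, abs_zero]
    positivity
  · have hk : ⌊s / (T / 2 ^ m)⌋₊ < 2 ^ m := by
      have h1 : ((⌊s / (T / 2 ^ m)⌋₊ + 1 : ℕ) : ℝ) ≤ t / (T / 2 ^ m) :=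
        (Nat.cast_le.2 (by omega)).trans (Nat.floor_le (by positivity))
      have h2 : t / (T / 2 ^ m) ≤ 2 ^ m := by rw [div_le_iff₀ hδ]; field_simp; exact ht
      exact_mod_cast (show (⌊s / (T / 2 ^ m)⌋₊ : ℝ) < ((2 ^ m : ℕ) : ℝ) by
        push_cast at h1 ⊢; linarith)
    rw [dyadicFloor, dyadicFloor, show ⌊t / (T / 2 ^ m)⌋₊ = ⌊s / (T / 2 ^ m)⌋₊ + 1 by omega]
    push_cast
    exact hξ m _ hk

lemma DyadicHolderBound.abs_sub_le_mul_rpow (hξ : DyadicHolderBound f T α a)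
    (hT : 0 < T) (hα : 0 < α) (ha : 0 ≤ a) (hf : ContinuousOn f (Icc 0 T)) (hs : s ∈ Icc 0 T)
    (ht : t ∈ Icc 0 T) (hst : s < t) :
    |f t - f s| ≤ holderChainingConst α * a * (t - s) ^ α := by
  have hts : 0 < t - s := sub_pos.2 hst
  -- the dyadic level whose mesh `T / 2 ^ m` is comparable to `t - s`
  obtain ⟨m, hm, hm'⟩ := exists_nat_pow_near (x := T / (t - s))
    ((one_le_div hts).2 (by linarith [hs.1, ht.2])) one_lt_two
  have hmesh : t - s ≤ T / 2 ^ m := by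
    rwa [le_div_iff₀ (by positivity), mul_comm, ← le_div_iff₀ hts]
  have hmesh' : T / 2 ^ m ≤ 2 * (t - s) := by
    rw [div_le_iff₀ (by positivity)]
    rw [div_lt_iff₀ hts, pow_succ] at hm'
    linarith
  have hr : (2 : ℝ) ^ (-α) < 1 := Real.rpow_lt_one_of_one_lt_of_neg one_lt_two (by linarith)
  have hr0 : 0 < (2 : ℝ) ^ (-α) := by positivity
  have he : 0 ≤ a * (T / 2 ^ m) ^ α := by positivity
  have hmid := hξ.abs_dyadicFloor_sub_dyadicFloor_le hT ha hs.1 ht.2 hst.le hmesh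
  have hs' := hξ.abs_dyadicFloor_sub_le hT hα ha hf hs m
  have ht' := hξ.abs_dyadicFloor_sub_le hT hα ha hf ht m
  have he' : a * (T / 2 ^ m) ^ α ≤ a * (T / 2 ^ m) ^ α / (1 - 2 ^ (-α)) :=
    le_div_self he (by linarith) (by linarith)
  have htri := abs_sub_le (f t) (f (dyadicFloor T m t)) (f s)
  have htri' := abs_sub_le (f (dyadicFloor T m t)) (f (dyadicFloor T m s)) (f s)
  rw [abs_sub_comm] at ht'
  calc |f t - f s| ≤ 3 * (a * (T / 2 ^ m) ^ α / (1 - 2 ^ (-α))) := by linarith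
    _ ≤ 3 * (a * (2 * (t - s)) ^ α / (1 - 2 ^ (-α))) := by gcongr
    _ = holderChainingConst α * a * (t - s) ^ α := by
        rw [holderChainingConst, Real.mul_rpow zero_le_two hts.le]; ring

end DyadicChaining

noncomputable def dyadicHolderSeminorm (f : ℝ → ℝ) (T α : ℝ) : ℝ≥0∞ :=
  ⨆ (j : ℕ) (k : Fin (2 ^ j)), ENNReal.ofReal
    (|f (((k : ℕ) + 1) * (T / 2 ^ j)) - f ((k : ℕ) * (T / 2 ^ j))| / (T / 2 ^ j) ^ α)

lemma ofReal_div_rpow_le_dyadicHolderSeminorm {f : ℝ → ℝ} {T α s t : ℝ} (hT : 0 < T)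
    (hα : 0 < α) (hf : ContinuousOn f (Icc 0 T)) (hs : s ∈ Icc 0 T) (ht : t ∈ Icc 0 T)
    (hst : s < t) :
    ENNReal.ofReal (|f t - f s| / (t - s) ^ α) ≤
      ENNReal.ofReal (holderChainingConst α) * dyadicHolderSeminorm f T α := by
  have hr : (2 : ℝ) ^ (-α) < 1 := Real.rpow_lt_one_of_one_lt_of_neg one_lt_two (by linarith)
  have hK : 0 < holderChainingConst α := div_pos (by positivity) (by linarith)
  by_cases htop : dyadicHolderSeminorm f T α = ⊤
  · rw [htop, ENNReal.mul_top (by simpa using hK)]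
    exact le_top
  have hξ : DyadicHolderBound f T α (dyadicHolderSeminorm f T α).toReal := fun j k hk => by
    rw [← div_le_iff₀ (by positivity), ← ENNReal.ofReal_le_iff_le_toReal htop]
    exact le_iSup₂_of_le (f := fun (j : ℕ) (k : Fin (2 ^ j)) => ENNReal.ofReal
      (|f (((k : ℕ) + 1) * (T / 2 ^ j)) - f ((k : ℕ) * (T / 2 ^ j))| / (T / 2 ^ j) ^ α))
      j ⟨k, hk⟩ le_rfl
  have hts : 0 < t - s := sub_pos.2 hst
  rw [← ENNReal.ofReal_toReal htop, ← ENNReal.ofReal_mul hK.le]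
  refine ENNReal.ofReal_le_ofReal ((div_le_iff₀ (by positivity)).2 ?_)
  exact hξ.abs_sub_le_mul_rpow hT hα ENNReal.toReal_nonneg hf hs ht hst

noncomputable def weightedDyadicHolderSeminorm (f : ℝ → ℝ) (α β : ℝ) : ℝ≥0∞ :=
  ⨆ n : ℕ, ENNReal.ofReal (((2 : ℝ) ^ n) ^ (-β)) * dyadicHolderSeminorm f (2 ^ n) α

lemma ofReal_weightedHolderQuotient_le {u : ℝ → ℝ} {H γ s t : ℝ} (hu : ContinuousOn u (Ici 0))
    (hα : 0 < γ + (1 - H) / 2) (hβ : 0 ≤ 1 / 2 - 2 * γ) (hs : 0 ≤ s) (hst : s < t) :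
    ENNReal.ofReal (((1 + s + t) ^ 2 / |s - t|) ^ γ * |u s - u t| /
      (|s - t| ^ ((1 - H) / 2) * (1 + s + t) ^ ((1 : ℝ) / 2))) ≤
    ENNReal.ofReal (2 ^ (1 / 2 - 2 * γ) * holderChainingConst (γ + (1 - H) / 2)) *
      weightedDyadicHolderSeminorm u (γ + (1 - H) / 2) (1 / 2 - 2 * γ) := by
  set α := γ + (1 - H) / 2
  set β := 1 / 2 - 2 * γ
  set X := 1 + s + t
  have hX : 1 ≤ X := by linarith
  have hts : 0 < t - s := sub_pos.2 hst
  have hsplit : (X ^ 2 / |s - t|) ^ γ * |u s - u t| / (|s - t| ^ ((1 - H) / 2) * X ^ ((1 : ℝ) / 2))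
      = X ^ (-β) * (|u t - u s| / (t - s) ^ α) := by
    rw [abs_sub_comm s, abs_of_pos hts, abs_sub_comm (u s), Real.div_rpow (by positivity) hts.le,
      ← Real.rpow_natCast, ← Real.rpow_mul (by positivity), Real.rpow_add hts,
      show -β = (2 : ℕ) * γ - 1 / 2 by simp only [β]; push_cast; ring,
      Real.rpow_sub (by positivity)]
    field_simp
  obtain ⟨n, hn, hn'⟩ := exists_nat_pow_near hX one_lt_two
  set T : ℝ := 2 ^ (n + 1)
  have hweight : X ^ (-β) ≤ 2 ^ β * T ^ (-β) := by
    calc X ^ (-β) ≤ ((2 : ℝ) ^ n) ^ (-β) :=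
          Real.rpow_le_rpow_of_nonpos (by positivity) hn (by linarith)
      _ = 2 ^ β * T ^ (-β) := by
          rw [show T = 2 ^ n * 2 from pow_succ 2 n, Real.mul_rpow (by positivity) zero_le_two,
            Real.rpow_neg zero_le_two]
          field_simp
  have hchain := ofReal_div_rpow_le_dyadicHolderSeminorm (by positivity : 0 < T) hα
    (hu.mono Icc_subset_Ici_self) ⟨hs, by linarith⟩ ⟨by linarith, by linarith⟩ hst
  calc ENNReal.ofReal _ = ENNReal.ofReal (X ^ (-β) * (|u t - u s| / (t - s) ^ α)) := by
        rw [hsplit]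
    _ ≤ ENNReal.ofReal (2 ^ β) * ENNReal.ofReal (T ^ (-β)) *
          ENNReal.ofReal (|u t - u s| / (t - s) ^ α) := by
        rw [← ENNReal.ofReal_mul (by positivity), ← ENNReal.ofReal_mul (by positivity)]
        exact ENNReal.ofReal_le_ofReal (mul_le_mul_of_nonneg_right hweight (by positivity))
    _ ≤ ENNReal.ofReal (2 ^ β) * ENNReal.ofReal (T ^ (-β)) *
          (ENNReal.ofReal (holderChainingConst α) * dyadicHolderSeminorm u T α) := by
        gcongr
    _ = ENNReal.ofReal (2 ^ β * holderChainingConst α) *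
          (ENNReal.ofReal (T ^ (-β)) * dyadicHolderSeminorm u T α) := by
        rw [ENNReal.ofReal_mul (by positivity)]; ring
    _ ≤ _ := by
        gcongr
        exact le_iSup (fun n : ℕ => ENNReal.ofReal (((2 : ℝ) ^ n) ^ (-β)) *
          dyadicHolderSeminorm u (2 ^ n) α) (n + 1)

lemma weightedHolderSup_le {u : ℝ → ℝ} {H γ : ℝ} (hu : ContinuousOn u (Ici 0))
    (hα : 0 < γ + (1 - H) / 2) (hβ : 0 ≤ 1 / 2 - 2 * γ) :
    weightedHolderSup H γ u ≤
      ENNReal.ofReal (2 ^ (1 / 2 - 2 * γ) * holderChainingConst (γ + (1 - H) / 2)) *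
        weightedDyadicHolderSeminorm u (γ + (1 - H) / 2) (1 / 2 - 2 * γ) := by
  refine iSup_le fun ⟨⟨s, t⟩, hs, ht, hst⟩ => ?_
  rcases hst.lt_or_gt with h | h
  · exact ofReal_weightedHolderQuotient_le hu hα hβ hs h
  · have := ofReal_weightedHolderQuotient_le hu hα hβ ht h
    rwa [add_right_comm, abs_sub_comm t, abs_sub_comm (u t)] at this

section Moments

variable {Ω : Type*} [MeasurableSpace Ω] {P : Measure Ω}

lemma lintegral_iSup_pow_le_tsum {ι : Type*} [Countable ι] {F : ι → Ω → ℝ≥0∞}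
    (hF : ∀ i, AEMeasurable (F i) P) {q : ℕ} (hq : q ≠ 0) :
    ∫⁻ ω, (⨆ i, F i ω) ^ q ∂P ≤ ∑' i, ∫⁻ ω, F i ω ^ q ∂P := by
  rw [← lintegral_tsum fun i => (hF i).pow_const q]
  refine lintegral_mono fun ω => ?_
  rw [ENNReal.iSup_pow_of_ne_zero hq]
  exact iSup_le fun i => ENNReal.le_tsum i

lemma lintegral_pow_lt_top_of_le [IsFiniteMeasure P] {f : Ω → ℝ≥0∞} {k m : ℕ} (hkm : k ≤ m)
    (hf : ∫⁻ ω, f ω ^ m ∂P < ⊤) : ∫⁻ ω, f ω ^ k ∂P < ⊤ := by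
  have hle : ∀ x : ℝ≥0∞, x ^ k ≤ 1 + x ^ m := fun x => by
    rcases le_total x 1 with hx | hx
    · exact (pow_le_one₀ bot_le hx).trans le_self_add
    · exact (pow_le_pow_right₀ hx hkm).trans le_add_self
  calc ∫⁻ ω, f ω ^ k ∂P ≤ ∫⁻ ω, 1 + f ω ^ m ∂P := lintegral_mono fun ω => hle (f ω)
    _ = P univ + ∫⁻ ω, f ω ^ m ∂P := by rw [lintegral_add_left measurable_const, lintegral_one]
    _ < ⊤ := ENNReal.add_lt_top.2 ⟨measure_lt_top P univ, hf⟩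

lemma lintegral_pow_lt_top_of_le_mul {f g : Ω → ℝ≥0∞} {C : ℝ≥0∞} (hC : C ≠ ⊤)
    (hfg : ∀ ω, f ω ≤ C * g ω) {k : ℕ} (hg : ∫⁻ ω, g ω ^ k ∂P < ⊤) : ∫⁻ ω, f ω ^ k ∂P < ⊤ :=
  calc ∫⁻ ω, f ω ^ k ∂P ≤ ∫⁻ ω, C ^ k * g ω ^ k ∂P :=
        lintegral_mono fun ω => (pow_le_pow_left₀ bot_le (hfg ω) k).trans_eq (mul_pow _ _ _)
    _ < ⊤ := by
        rw [lintegral_const_mul' _ _ (ENNReal.pow_ne_top hC)]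
        exact ENNReal.mul_lt_top (ENNReal.pow_lt_top hC.lt_top) hg

variable {X : ℝ → Ω → ℝ}

lemma measurable_dyadicHolderSeminorm (hX : ∀ t, Measurable (X t)) (T α : ℝ) :
    Measurable fun ω => dyadicHolderSeminorm (X · ω) T α :=
  .iSup fun _ => .iSup fun _ => ((((hX _).sub (hX _)).abs).div_const _).ennreal_ofReal

lemma measurable_weightedDyadicHolderSeminorm (hX : ∀ t, Measurable (X t)) (α β : ℝ) :
    Measurable fun ω => weightedDyadicHolderSeminorm (X · ω) α β :=
  .iSup fun _ => (measurable_dyadicHolderSeminorm hX _ _).const_mul _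

lemma lintegral_ofReal_div_rpow_pow_le {q : ℕ} {M : ℝ≥0∞} {r α : ℝ}
    (hmom : ∀ s t, 0 ≤ s → s ≤ t →
      ∫⁻ ω, ‖X t ω - X s ω‖ₑ ^ q ∂P ≤ M * ENNReal.ofReal ((t - s) ^ r))
    {s δ : ℝ} (hs : 0 ≤ s) (hδ : 0 < δ) :
    ∫⁻ ω, ENNReal.ofReal (|X (s + δ) ω - X s ω| / δ ^ α) ^ q ∂P ≤
      M * ENNReal.ofReal (δ ^ (r - q * α)) := by
  have hinc := hmom s (s + δ) hs (by linarith)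
  rw [add_sub_cancel_left] at hinc
  calc ∫⁻ ω, ENNReal.ofReal (|X (s + δ) ω - X s ω| / δ ^ α) ^ q ∂P
      = ENNReal.ofReal (δ ^ α)⁻¹ ^ q * ∫⁻ ω, ‖X (s + δ) ω - X s ω‖ₑ ^ q ∂P := by
        rw [← lintegral_const_mul' _ _ (ENNReal.pow_ne_top ENNReal.ofReal_ne_top)]
        refine lintegral_congr fun ω => ?_
        rw [← mul_pow, Real.enorm_eq_ofReal_abs, ← ENNReal.ofReal_mul (by positivity),
          inv_mul_eq_div]
    _ ≤ ENNReal.ofReal (δ ^ α)⁻¹ ^ q * (M * ENNReal.ofReal (δ ^ r)) := by gcongr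
    _ = M * ENNReal.ofReal (δ ^ (r - q * α)) := by
        rw [← ENNReal.ofReal_pow (by positivity), mul_left_comm,
          ← ENNReal.ofReal_mul (by positivity), Real.rpow_sub hδ, mul_comm (q : ℝ),
          Real.rpow_mul_natCast hδ.le, inv_pow, inv_mul_eq_div]

lemma lintegral_dyadicHolderSeminorm_pow_le (hX : ∀ t, Measurable (X t)) {q : ℕ} (hq : q ≠ 0)
    {M : ℝ≥0∞} {r α T : ℝ} (hT : 0 < T)
    (hmom : ∀ s t, 0 ≤ s → s ≤ t →
      ∫⁻ ω, ‖X t ω - X s ω‖ₑ ^ q ∂P ≤ M * ENNReal.ofReal ((t - s) ^ r)) :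
    ∫⁻ ω, dyadicHolderSeminorm (X · ω) T α ^ q ∂P ≤
      M * ENNReal.ofReal (T ^ (r - q * α)) *
        ∑' j : ℕ, ENNReal.ofReal (2 ^ (1 - (r - q * α))) ^ j := by
  set F : (j : ℕ) → Fin (2 ^ j) → Ω → ℝ≥0∞ := fun j k ω => ENNReal.ofReal
    (|X (((k : ℕ) + 1) * (T / 2 ^ j)) ω - X ((k : ℕ) * (T / 2 ^ j)) ω| / (T / 2 ^ j) ^ α)
  have hF : ∀ j k, Measurable (F j k) := fun j k =>
    ((((hX _).sub (hX _)).abs).div_const _).ennreal_ofReal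
  have hcell : ∀ j k, ∫⁻ ω, F j k ω ^ q ∂P ≤ M * ENNReal.ofReal ((T / 2 ^ j) ^ (r - q * α)) :=
    fun j k => by
      simpa only [F, add_one_mul] using
        lintegral_ofReal_div_rpow_pow_le hmom (s := (k : ℕ) * (T / 2 ^ j)) (by positivity)
          (by positivity)
  calc ∫⁻ ω, dyadicHolderSeminorm (X · ω) T α ^ q ∂P
      ≤ ∑' j : ℕ, ∫⁻ ω, (⨆ k, F j k ω) ^ q ∂P :=
        lintegral_iSup_pow_le_tsum (fun j => (Measurable.iSup (hF j)).aemeasurable) hq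
    _ ≤ ∑' j : ℕ, ∑' k : Fin (2 ^ j), M * ENNReal.ofReal ((T / 2 ^ j) ^ (r - q * α)) :=
        ENNReal.tsum_le_tsum fun j =>
          (lintegral_iSup_pow_le_tsum (fun k => (hF j k).aemeasurable) hq).trans
            (ENNReal.tsum_le_tsum (hcell j))
    _ = ∑' j : ℕ, M * (ENNReal.ofReal (T ^ (r - q * α)) *
          ENNReal.ofReal (2 ^ (1 - (r - q * α))) ^ j) := by
        refine tsum_congr fun j => ?_
        rw [tsum_fintype, Finset.sum_const, Finset.card_univ, Fintype.card_fin, nsmul_eq_mul,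
          Nat.cast_pow, Nat.cast_ofNat, mul_left_comm, two_pow_mul_ofReal_div_two_pow_rpow hT.le]
    _ = _ := by rw [ENNReal.tsum_mul_left, ENNReal.tsum_mul_left, mul_assoc]

lemma lintegral_weightedDyadicHolderSeminorm_pow_lt_top (hX : ∀ t, Measurable (X t)) {q : ℕ}
    (hq : q ≠ 0) {M : ℝ≥0∞} (hM : M ≠ ⊤) {r α β : ℝ}
    (hmom : ∀ s t, 0 ≤ s → s ≤ t →
      ∫⁻ ω, ‖X t ω - X s ω‖ₑ ^ q ∂P ≤ M * ENNReal.ofReal ((t - s) ^ r))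
    (hfine : 1 < r - q * α) (hlarge : r - q * α < q * β) :
    ∫⁻ ω, weightedDyadicHolderSeminorm (X · ω) α β ^ q ∂P < ⊤ := by
  set G := ∑' j : ℕ, ENNReal.ofReal (2 ^ (1 - (r - q * α))) ^ j
  have hgeom : ∀ {e : ℝ}, e < 0 → ∑' n : ℕ, ENNReal.ofReal (2 ^ e) ^ n < ⊤ := fun he =>
    tsum_geometric_lt_top.2 (by simpa using Real.rpow_lt_one_of_one_lt_of_neg one_lt_two he)
  have hscale : ∀ n : ℕ, ENNReal.ofReal (((2 : ℝ) ^ n) ^ (-β)) ^ q *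
      ENNReal.ofReal (((2 : ℝ) ^ n) ^ (r - q * α)) =
        ENNReal.ofReal (2 ^ (r - q * α - q * β)) ^ n := fun n => by
    rw [ofReal_two_pow_rpow, ofReal_two_pow_rpow, ← pow_mul, mul_comm n, pow_mul, ← mul_pow,
      ← ENNReal.ofReal_pow (by positivity), ← ENNReal.ofReal_mul (by positivity),
      ← Real.rpow_mul_natCast zero_le_two, ← Real.rpow_add zero_lt_two]
    ring_nf
  calc ∫⁻ ω, weightedDyadicHolderSeminorm (X · ω) α β ^ q ∂P
      ≤ ∑' n : ℕ, ∫⁻ ω, (ENNReal.ofReal (((2 : ℝ) ^ n) ^ (-β)) *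
          dyadicHolderSeminorm (X · ω) (2 ^ n) α) ^ q ∂P :=
        lintegral_iSup_pow_le_tsum (fun n =>
          ((measurable_dyadicHolderSeminorm hX _ _).const_mul _).aemeasurable) hq
    _ ≤ ∑' n : ℕ, ENNReal.ofReal (((2 : ℝ) ^ n) ^ (-β)) ^ q *
          (M * ENNReal.ofReal (((2 : ℝ) ^ n) ^ (r - q * α)) * G) := by
        refine ENNReal.tsum_le_tsum fun n => ?_
        simp_rw [mul_pow]
        rw [lintegral_const_mul' _ _ (ENNReal.pow_ne_top ENNReal.ofReal_ne_top)]
        gcongr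
        exact lintegral_dyadicHolderSeminorm_pow_le hX hq (by positivity) hmom
    _ = M * G * ∑' n : ℕ, ENNReal.ofReal (2 ^ (r - q * α - q * β)) ^ n := by
        rw [← ENNReal.tsum_mul_left]
        refine tsum_congr fun n => ?_
        rw [← hscale]; ring
    _ < ⊤ := ENNReal.mul_lt_top (ENNReal.mul_lt_top hM.lt_top (hgeom (by linarith)))
        (hgeom (by linarith))

lemma lintegral_enorm_pow_gaussianReal (p : ℕ) (v : ℝ≥0) :
    ∫⁻ x, ‖x‖ₑ ^ (2 * p) ∂gaussianReal 0 v = v ^ p * ∫⁻ x, ‖x‖ₑ ^ (2 * p) ∂gaussianReal 0 1 := by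
  have hmap : (gaussianReal 0 1).map (√(v : ℝ) * ·) = gaussianReal 0 v := by
    rw [gaussianReal_map_const_mul, mul_zero, mul_one]
    congr 1
    ext; simp
  have hsqrt : ‖√(v : ℝ)‖ₑ ^ 2 = v := by
    rw [Real.enorm_of_nonneg (Real.sqrt_nonneg _), ← ENNReal.ofReal_pow (Real.sqrt_nonneg _),
      Real.sq_sqrt v.coe_nonneg, ENNReal.ofReal_coe_nnreal]
  rw [← hmap, lintegral_map (by fun_prop) (measurable_const_mul _)]
  simp_rw [enorm_mul, mul_pow]
  rw [lintegral_const_mul' _ _ (by simp), pow_mul, hsqrt]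

lemma lintegral_enorm_pow_gaussianReal_lt_top (q : ℕ) : ∫⁻ x, ‖x‖ₑ ^ q ∂gaussianReal 0 1 < ⊤ := by
  simpa [HasFiniteIntegral] using ((memLp_id_gaussianReal (q : ℝ≥0)).integrable_enorm_pow').2

lemma lintegral_enorm_sub_pow_eq {W : ℝ → Ω → ℝ} (hW : ∀ t, Measurable (W t))
    (hgauss : ∀ s t : ℝ, 0 ≤ s → 0 ≤ t →
      P.map (fun ω => W t ω - W s ω) = gaussianReal 0 (Real.toNNReal |t - s|))
    (p : ℕ) {s t : ℝ} (hs : 0 ≤ s) (hst : s ≤ t) :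
    ∫⁻ ω, ‖W t ω - W s ω‖ₑ ^ (2 * p) ∂P =
      (∫⁻ x, ‖x‖ₑ ^ (2 * p) ∂gaussianReal 0 1) * ENNReal.ofReal ((t - s) ^ (p : ℝ)) := by
  rw [← lintegral_map (f := fun x : ℝ => ‖x‖ₑ ^ (2 * p)) (g := fun ω => W t ω - W s ω)
      (by fun_prop) ((hW t).sub (hW s)),
    hgauss s t hs (hs.trans hst), lintegral_enorm_pow_gaussianReal,
    abs_of_nonneg (sub_nonneg.2 hst),
    Real.rpow_natCast, ENNReal.ofReal_pow (sub_nonneg.2 hst), mul_comm]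
  rfl

lemma lintegral_weightedDyadicHolderSeminorm_pow_lt_top_of_map_eq_gaussianReal
    [IsFiniteMeasure P] {W : ℝ → Ω → ℝ} (hW : ∀ t, Measurable (W t))
    (hgauss : ∀ s t : ℝ, 0 ≤ s → 0 ≤ t →
      P.map (fun ω => W t ω - W s ω) = gaussianReal 0 (Real.toNNReal |t - s|))
    {α β : ℝ} (hα : α < 1 / 2) (hαβ : 1 < 2 * (α + β)) (k : ℕ) :
    ∫⁻ ω, weightedDyadicHolderSeminorm (W · ω) α β ^ k ∂P < ⊤ := by
  obtain ⟨p, hp⟩ := exists_nat_gt (max (k : ℝ) (1 - 2 * α)⁻¹)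
  have hp1 : 1 < p * (1 - 2 * α) :=
    (inv_lt_iff_one_lt_mul₀ (by linarith)).1 ((le_max_right _ _).trans_lt hp)
  have hkp : k < p := by exact_mod_cast (le_max_left _ _).trans_lt hp
  have hp0 : p ≠ 0 := by omega
  refine lintegral_pow_lt_top_of_le (m := 2 * p) (by omega) ?_
  refine lintegral_weightedDyadicHolderSeminorm_pow_lt_top hW (by positivity)
    (lintegral_enorm_pow_gaussianReal_lt_top _).ne
    (fun s t hs hst => (lintegral_enorm_sub_pow_eq hW hgauss _ hs hst).le) ?_ ?_
  · push_cast; linarith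
  · have hp_pos : (0 : ℝ) < p := by exact_mod_cast Nat.pos_of_ne_zero hp0
    push_cast; nlinarith

end Moments

theorem stmt3_general {Ω : Type*} [MeasurableSpace Ω] (P : Measure Ω) [IsProbabilityMeasure P]
    (W : ℝ → Ω → ℝ)
    (hWmeas : ∀ t : ℝ, Measurable (W t))
    (hWcont : ∀ ω, ContinuousOn (fun t => W t ω) (Set.Ici (0 : ℝ)))
    (hWgauss : ∀ s t : ℝ, 0 ≤ s → 0 ≤ t →
      P.map (fun ω => W t ω - W s ω) = ProbabilityTheory.gaussianReal 0 (Real.toNNReal |t - s|))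
    (H : ℝ) (hH : H ∈ Set.Ioo (0 : ℝ) 1) :
    ∃ γ : ℝ, 0 < γ ∧
      (∀ᵐ ω ∂P, weightedHolderSup H γ (fun t => W t ω) < ⊤) ∧
      (∀ k : ℕ, (∫⁻ ω, (weightedHolderSup H γ (fun t => W t ω)) ^ k ∂P) < ⊤) := by
  obtain ⟨hH0, hH1⟩ := hH
  -- the exponents `α = γ + (1 - H) / 2` and `β = 1 / 2 - 2 * γ` below need `2 * γ < min H (1 - H)`
  obtain ⟨γ, hγ0, hγH, hγH'⟩ : ∃ γ : ℝ, 0 < γ ∧ γ ≤ H / 4 ∧ γ ≤ (1 - H) / 4 :=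
    ⟨min H (1 - H) / 4, by have := lt_min hH0 (sub_pos.2 hH1); positivity,
      by have := min_le_left H (1 - H); linarith, by have := min_le_right H (1 - H); linarith⟩
  have hbound := fun ω => weightedHolderSup_le (hWcont ω) (by linarith : 0 < γ + (1 - H) / 2)
    (by linarith : 0 ≤ 1 / 2 - 2 * γ)
  have hmom := lintegral_weightedDyadicHolderSeminorm_pow_lt_top_of_map_eq_gaussianReal hWmeas
    hWgauss (α := γ + (1 - H) / 2) (β := 1 / 2 - 2 * γ) (by linarith) (by linarith)
  refine ⟨γ, hγ0, ?_, fun k => lintegral_pow_lt_top_of_le_mul ENNReal.ofReal_ne_top hbound (hmom k)⟩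
  filter_upwards [ae_lt_top (measurable_weightedDyadicHolderSeminorm hWmeas _ _)
    (by simpa only [pow_one] using (hmom 1).ne)] with ω hω
  exact (hbound ω).trans_lt (ENNReal.mul_lt_top ENNReal.ofReal_lt_top hω)

/-- For a standard one-dimensional Brownian motion `W` and any `H ∈ (0,1)` there is
`γ > 0` such that the weighted Hölder supremum of the sample paths is almost surely
finite and has finite moments of all orders. -/
theorem stmt3 {Ω : Type*} [MeasurableSpace Ω] (P : Measure Ω) [IsProbabilityMeasure P]
    (W : ℝ → Ω → ℝ)
    (hWmeas : ∀ t : ℝ, Measurable (W t))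
    (hWcont : ∀ ω, ContinuousOn (fun t => W t ω) (Set.Ici (0 : ℝ)))
    (hW0 : ∀ ω, W 0 ω = 0)
    (hWindep : ∀ (m : ℕ) (t : ℕ → ℝ), (∀ i, 0 ≤ t i) → Monotone t →
      ProbabilityTheory.iIndepFun (m := fun _ : Fin m => (inferInstance : MeasurableSpace ℝ))
        (fun (i : Fin m) ω => W (t (i + 1)) ω - W (t i) ω) P)
    (hWgauss : ∀ s t : ℝ, 0 ≤ s → 0 ≤ t →
      P.map (fun ω => W t ω - W s ω) = ProbabilityTheory.gaussianReal 0 (Real.toNNReal |t - s|))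
    (H : ℝ) (hH : H ∈ Set.Ioo (0 : ℝ) 1) :
    ∃ γ : ℝ, 0 < γ ∧
      (∀ᵐ ω ∂P, weightedHolderSup H γ (fun t => W t ω) < ⊤) ∧
      (∀ k : ℕ, (∫⁻ ω, (weightedHolderSup H γ (fun t => W t ω)) ^ k ∂P) < ⊤) :=
  stmt3_general P W hWmeas hWcont hWgauss H hH
end

section
/- Let n ≥ 1, let f : ℝⁿ → ℝⁿ be continuously differentiable and satisfy: (A1) there exist constants C₁, C₂, C₃ > 0 with ⟨f(x) − f(y), x − y⟩ ≤ min{C₁ − C₂‖x−y‖², C₃‖x−y‖²} for all x, y ∈ ℝⁿ; (A2) there exist C, N > 0 with ‖f(x)‖ ≤ C(1+‖x‖)^N and ‖Df(x)‖ ≤ C(1+‖x‖)^N for all x. Let σ be an n×n real matrix and T > 0. Then there exists a unique map Φ_T : ℝⁿ × C([0,T],ℝⁿ) → C([0,T],ℝⁿ) such that for every x ∈ ℝⁿ and b ∈ C([0,T],ℝⁿ) with b(0) = 0, Φ_T(x,b)(t) = σ b(t) + x + ∫₀^t f(Φ_T(x,b)(s)) ds for all t ∈ [0,T]; furthermore Φ_T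 is locally Lipschitz continuous with respect to (x,b), where C([0,T],ℝⁿ) carries the supremum norm. -/
/-!
Truncating `f` by the radial retraction onto a ball of radius `R` makes the equation
`u = w + ∫₀^· f ∘ u` globally Lipschitz, so Picard iteration solves it. Dissipativity gives
`⟪f y, y⟫ ≤ 0` on large spheres, so the truncation only pushes points inward, and an energy
estimate for `‖u - w‖ ^ 2` bounds every solution, truncated or not, in terms of `‖w‖` alone;
beyond that bound the truncation is inactive. On the resulting ball `f` is Lipschitz, and
Grönwall's inequality yields uniqueness and a Lipschitz bound `exp (L T)` for `w ↦ u`.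
The map `Φ` is this solution map composed with the continuous linear map `(x, b) ↦ σ b + x`.
-/

open MeasureTheory Set Real Function Metric
open scoped RealInnerProductSpace NNReal Nat

section RadialRetraction

variable {E : Type*} [NormedAddCommGroup E] [NormedSpace ℝ E] {R : ℝ}

noncomputable def radialRetraction (R : ℝ) (z : E) : E := (R / max R ‖z‖) • z

lemma norm_radialRetraction_le (hR : 0 < R) (z : E) : ‖radialRetraction R z‖ ≤ R := by
  have hmax : 0 < max R ‖z‖ := hR.trans_le (le_max_left _ _)
  rw [radialRetraction, norm_smul, norm_div, Real.norm_of_nonneg hR.le,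
    Real.norm_of_nonneg hmax.le, div_mul_eq_mul_div, div_le_iff₀ hmax]
  exact mul_le_mul_of_nonneg_left (le_max_right _ _) hR.le

lemma radialRetraction_of_norm_le {z : E} (hz : ‖z‖ ≤ R) : radialRetraction R z = z := by
  rcases ((norm_nonneg z).trans hz).eq_or_lt with rfl | hR
  · simp [radialRetraction, norm_le_zero_iff.mp hz]
  · rw [radialRetraction, max_eq_left hz, div_self hR.ne', one_smul]

lemma lipschitzWith_radialRetraction (hR : 0 < R) :
    LipschitzWith 2 (radialRetraction (E := E) R) := by
  refine LipschitzWith.of_dist_le_mul fun z y => ?_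
  set a := max R ‖z‖
  set b := max R ‖y‖
  have ha : 0 < a := hR.trans_le (le_max_left _ _)
  have hb : 0 < b := hR.trans_le (le_max_left _ _)
  have hRa : R / a ≤ 1 := div_le_one_of_le₀ (le_max_left _ _) ha.le
  have hab : |b - a| ≤ ‖z - y‖ := by
    calc |b - a| ≤ |‖y‖ - ‖z‖| := by
          simpa only [max_comm _ R] using abs_max_sub_max_le_abs ‖y‖ ‖z‖ R
      _ ≤ ‖z - y‖ := by rw [norm_sub_rev]; exact abs_norm_sub_norm_le y z
  have hy : |R / a - R / b| * ‖y‖ ≤ ‖z - y‖ := by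
    have hyb : ‖y‖ / b ≤ 1 := div_le_one_of_le₀ (le_max_right _ _) hb.le
    have : |R / a - R / b| * ‖y‖ = R / a * |b - a| * (‖y‖ / b) := by
      rw [show R / a - R / b = R / a * (b - a) / b by field_simp, abs_div, abs_mul,
        abs_of_nonneg (by positivity : 0 ≤ R / a), abs_of_pos hb]
      ring
    rw [this]
    calc R / a * |b - a| * (‖y‖ / b) ≤ 1 * |b - a| * 1 := by gcongr
      _ ≤ ‖z - y‖ := by simpa using hab
  calc dist (radialRetraction R z) (radialRetraction R y)
      = ‖(R / a) • (z - y) + (R / a - R / b) • y‖ := by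
        rw [dist_eq_norm, radialRetraction, radialRetraction]; congr 1; module
    _ ≤ R / a * ‖z - y‖ + |R / a - R / b| * ‖y‖ := by
        refine (norm_add_le _ _).trans ?_
        rw [norm_smul, norm_smul, Real.norm_of_nonneg (by positivity), Real.norm_eq_abs]
    _ ≤ 2 * dist z y := by
        rw [dist_eq_norm]
        nlinarith [norm_nonneg (z - y)]

lemma LipschitzOnWith.comp_radialRetraction {F : Type*} [PseudoMetricSpace F] {f : E → F}
    {L : ℝ≥0} (hL : LipschitzOnWith L f (closedBall 0 R)) (hR : 0 < R) :
    LipschitzWith (L * 2) (f ∘ radialRetraction R) :=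
  lipschitzOnWith_univ.mp <| hL.comp (lipschitzWith_radialRetraction hR).lipschitzOnWith
    fun z _ => mem_closedBall_zero_iff.mpr (norm_radialRetraction_le hR z)

end RadialRetraction

section IntegralEquation

variable {E : Type*} [NormedAddCommGroup E] [NormedSpace ℝ E] {T : ℝ} (hT : 0 ≤ T)

def IsIntegralSolution (f : E → E) (w u : C(Icc 0 T, E)) : Prop :=
  ∀ t : Icc 0 T, u t = w t + ∫ s in (0 : ℝ)..t, f (IccExtend hT u s)

variable {hT}

lemma isIntegralSolution_congr {f g : E → E} {w u : C(Icc 0 T, E)}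
    (hfg : ∀ t, f (u t) = g (u t)) :
    IsIntegralSolution hT f w u ↔ IsIntegralSolution hT g w u := by
  have : (fun s => f (IccExtend hT u s)) = fun s => g (IccExtend hT u s) :=
    funext fun s => hfg _
  simp only [IsIntegralSolution, this]

variable (hT) in
noncomputable def picardMap {f : E → E} (hf : Continuous f) (w u : C(Icc 0 T, E)) :
    C(Icc 0 T, E) where
  toFun t := w t + ∫ s in (0 : ℝ)..t, f (IccExtend hT u s)
  continuous_toFun := w.continuous.add <|
    (intervalIntegral.continuous_primitive
      (fun _ _ => (hf.comp u.continuous.Icc_extend').intervalIntegrable _ _) 0).comp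
      continuous_subtype_val

lemma picardMap_apply {f : E → E} (hf : Continuous f) (w u : C(Icc 0 T, E)) (t : Icc 0 T) :
    picardMap hT hf w u t = w t + ∫ s in (0 : ℝ)..t, f (IccExtend hT u s) := rfl

lemma norm_iterate_picardMap_sub_le {f : E → E} {L : ℝ≥0} (hf : LipschitzWith L f)
    (w : C(Icc 0 T, E)) (k : ℕ) (u u' : C(Icc 0 T, E)) (t : Icc 0 T) :
    ‖(picardMap hT hf.continuous w)^[k] u t - (picardMap hT hf.continuous w)^[k] u' t‖ ≤
      (L * t) ^ k / k ! * dist u u' := by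
  induction k generalizing t with
  | zero => simpa [← dist_eq_norm] using ContinuousMap.dist_apply_le_dist (f := u) (g := u') t
  | succ k ih =>
    set F := picardMap hT hf.continuous w
    have hint : ∀ v : C(Icc 0 T, E), IntervalIntegrable (fun s => f (IccExtend hT v s))
        volume 0 t := fun v => (hf.continuous.comp v.continuous.Icc_extend').intervalIntegrable _ _
    rw [iterate_succ_apply', iterate_succ_apply', picardMap_apply, picardMap_apply,
      add_sub_add_left_eq_sub, ← intervalIntegral.integral_sub (hint _) (hint _)]
    have hbound : ∀ s ∈ Ioc (0 : ℝ) t,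
        ‖f (IccExtend hT (F^[k] u) s) - f (IccExtend hT (F^[k] u') s)‖ ≤
          L * ((L * s) ^ k / k ! * dist u u') := by
      intro s hs
      have hsT : s ∈ Icc 0 T := ⟨hs.1.le, hs.2.trans t.2.2⟩
      rw [IccExtend_of_mem _ _ hsT, IccExtend_of_mem _ _ hsT, ← dist_eq_norm]
      exact (hf.dist_le_mul _ _).trans
        (mul_le_mul_of_nonneg_left (by simpa [dist_eq_norm] using ih ⟨s, hsT⟩) L.2)
    have hval : ∫ s in (0 : ℝ)..t, L * ((L * s) ^ k / k ! * dist u u') =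
        (L * t) ^ (k + 1) / (k + 1)! * dist u u' := by
      have : (fun s : ℝ => L * ((L * s) ^ k / k ! * dist u u')) =
          fun s => L ^ (k + 1) / k ! * dist u u' * s ^ k := by
        funext s; ring
      rw [this, intervalIntegral.integral_const_mul, integral_pow, Nat.factorial_succ]
      push_cast
      field_simp
      ring
    refine (intervalIntegral.norm_integral_le_of_norm_le t.2.1
      (ae_of_all _ hbound) (Continuous.intervalIntegrable (by fun_prop) _ _)).trans hval.le

lemma lipschitzWith_iterate_picardMap {f : E → E} {L : ℝ≥0} (hf : LipschitzWith L f)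
    (w : C(Icc 0 T, E)) (k : ℕ) :
    LipschitzWith ((L * T) ^ k / k !).toNNReal (picardMap hT hf.continuous w)^[k] := by
  refine LipschitzWith.of_dist_le_mul fun u u' => ?_
  rw [Real.coe_toNNReal _ (by positivity)]
  refine (ContinuousMap.dist_le (by positivity)).mpr fun t => ?_
  rw [dist_eq_norm]
  refine (norm_iterate_picardMap_sub_le hf w k u u' t).trans ?_
  have := t.2.1
  gcongr
  exact t.2.2

theorem exists_isIntegralSolution_of_lipschitzWith [CompleteSpace E] {f : E → E} {L : ℝ≥0}
    (hf : LipschitzWith L f) (w : C(Icc 0 T, E)) : ∃ u, IsIntegralSolution hT f w u := by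
  obtain ⟨m, hm⟩ : ∃ m : ℕ, (L * T) ^ m / m ! < 1 :=
    ((FloorSemiring.tendsto_pow_div_factorial_atTop _).eventually (gt_mem_nhds one_pos)).exists
  have hF : ContractingWith _ (picardMap hT hf.continuous w)^[m] :=
    ⟨Real.toNNReal_lt_one.mpr hm, lipschitzWith_iterate_picardMap hf w m⟩
  have : Nonempty C(Icc 0 T, E) := ⟨w⟩
  exact ⟨_, fun t => (DFunLike.congr_fun hF.isFixedPt_fixedPoint_iterate t).symm⟩

lemma gronwallBound_zero_mul_add (K δ x : ℝ) :
    gronwallBound 0 K (K * δ) x + δ = δ * exp (K * x) := by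
  rcases eq_or_ne K 0 with rfl | hK
  · simp [gronwallBound_K0]
  · rw [gronwallBound_of_K_ne_0 hK]
    field_simp
    ring

theorem IsIntegralSolution.dist_le [CompleteSpace E] {f : E → E} (hf : Continuous f) {R : ℝ}
    {L : ℝ≥0} (hL : LipschitzOnWith L f (closedBall 0 R)) {w w' u u' : C(Icc 0 T, E)}
    (hu : IsIntegralSolution hT f w u) (hu' : IsIntegralSolution hT f w' u')
    (huR : ‖u‖ ≤ R) (huR' : ‖u'‖ ≤ R) :
    dist u u' ≤ exp (L * T) * dist w w' := by
  set δ := dist w w'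
  set G : ℝ → E := fun r =>
    (∫ s in (0 : ℝ)..r, f (IccExtend hT u s)) - ∫ s in (0 : ℝ)..r, f (IccExtend hT u' s)
  have hG : ∀ r, HasDerivAt G (f (IccExtend hT u r) - f (IccExtend hT u' r)) r := fun r =>
    ((hf.comp u.continuous.Icc_extend').integral_hasStrictDerivAt 0 r).hasDerivAt.sub
      ((hf.comp u'.continuous.Icc_extend').integral_hasStrictDerivAt 0 r).hasDerivAt
  have hdist : ∀ t : Icc 0 T, ‖u t - u' t‖ ≤ ‖G t‖ + δ := fun t => by
    have : u t - u' t = G t + (w t - w' t) := by rw [hu t, hu' t]; dsimp only [G]; abel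
    have hw : ‖w t - w' t‖ ≤ δ := by
      rw [← dist_eq_norm]; exact ContinuousMap.dist_apply_le_dist t
    rw [this]
    exact (norm_add_le _ _).trans (by gcongr)
  have hgron : ∀ x ∈ Icc 0 T, ‖G x‖ ≤ gronwallBound 0 L (L * δ) (x - 0) := by
    refine norm_le_gronwallBound_of_norm_deriv_right_le
      (fun r _ => (hG r).continuousAt.continuousWithinAt) (fun r _ => (hG r).hasDerivWithinAt)
      (by simp [G]) fun r hr => ?_
    have hrT : r ∈ Icc 0 T := Ico_subset_Icc_self hr
    rw [IccExtend_of_mem _ _ hrT, IccExtend_of_mem _ _ hrT, ← dist_eq_norm, ← mul_add]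
    have hmem : ∀ v : C(Icc 0 T, E), ‖v‖ ≤ R → v ⟨r, hrT⟩ ∈ closedBall 0 R := fun v hv =>
      mem_closedBall_zero_iff.mpr ((v.norm_coe_le_norm _).trans hv)
    refine (hL.dist_le_mul _ (hmem u huR) _ (hmem u' huR')).trans ?_
    rw [dist_eq_norm]
    exact mul_le_mul_of_nonneg_left (hdist ⟨r, hrT⟩) L.2
  refine (ContinuousMap.dist_le (by positivity)).mpr fun t => ?_
  calc dist (u t) (u' t) ≤ gronwallBound 0 L (L * δ) T + δ := by
        rw [dist_eq_norm]
        refine (hdist t).trans (add_le_add_left ?_ _)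
        refine (hgron t t.2).trans (gronwallBound_mono le_rfl (by positivity) L.2 ?_)
        simpa using t.2.2
    _ = exp (L * T) * δ := by rw [gronwallBound_zero_mul_add, mul_comm]

end IntegralEquation

section Dissipative

variable {E : Type*} [NormedAddCommGroup E] [InnerProductSpace ℝ E] {T : ℝ} {hT : 0 ≤ T}

/-- The derivative of `‖u t - w t‖ ^ 2 = ‖∫₀ᵗ g (u s) ds‖ ^ 2` is `2 ⟪u t - w t, g (u t)⟫`. -/
theorem IsIntegralSolution.sq_norm_sub_le [CompleteSpace E] {g : E → E} (hg : Continuous g)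
    {w u : C(Icc 0 T, E)} (hu : IsIntegralSolution hT g w u) {A B : ℝ} (hA : 0 ≤ A) (hB : 0 ≤ B)
    (hgu : ∀ t, ⟪g (u t), u t - w t⟫ ≤ A + B * ‖u t - w t‖) (t : Icc 0 T) :
    ‖u t - w t‖ ^ 2 ≤ gronwallBound 0 B (2 * A + B) T := by
  set v : ℝ → E := fun r => ∫ s in (0 : ℝ)..r, g (IccExtend hT u s)
  have hv : ∀ r, HasDerivAt v (g (IccExtend hT u r)) r := fun r =>
    ((hg.comp u.continuous.Icc_extend').integral_hasStrictDerivAt 0 r).hasDerivAt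
  have hvu : ∀ t : Icc 0 T, v t = u t - w t := fun t => by rw [hu t]; abel
  have hgron : ∀ x ∈ Icc 0 T, ‖v x‖ ^ 2 ≤ gronwallBound 0 B (2 * A + B) (x - 0) := by
    refine le_gronwallBound_of_liminf_deriv_right_le
      (fun r _ => (hv r).norm_sq.continuousAt.continuousWithinAt)
      (fun r _ _ hr => (hv r).norm_sq.hasDerivWithinAt.liminf_right_slope_le hr)
      (by simp [v]) fun r hr => ?_
    have hrT : r ∈ Icc 0 T := Ico_subset_Icc_self hr
    have h := hgu ⟨r, hrT⟩
    rw [IccExtend_of_mem _ _ hrT, hvu ⟨r, hrT⟩, real_inner_comm]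
    nlinarith [sq_nonneg (‖u ⟨r, hrT⟩ - w ⟨r, hrT⟩‖ - 1)]
  rw [← hvu t]
  refine (hgron t t.2).trans (gronwallBound_mono le_rfl (by positivity) hB ?_)
  simpa using t.2.2

/-- Outside the ball the retraction moves a point radially inward, so `z - radialRetraction R z`
is a nonnegative multiple of `radialRetraction R z`. -/
lemma inner_sub_radialRetraction_nonpos {R : ℝ} (hR : 0 < R) {g : E → E}
    (hg : ∀ y, R ≤ ‖y‖ → ⟪g y, y⟫ ≤ 0) (z : E) :
    ⟪g (radialRetraction R z), z - radialRetraction R z⟫ ≤ 0 := by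
  rcases le_or_gt ‖z‖ R with hz | hz
  · simp [radialRetraction_of_norm_le hz]
  have hz0 : 0 < ‖z‖ := hR.trans hz
  have hmax : max R ‖z‖ = ‖z‖ := max_eq_right hz.le
  have hnorm : ‖radialRetraction R z‖ = R := by
    rw [radialRetraction, hmax, norm_smul, Real.norm_of_nonneg (by positivity),
      div_mul_cancel₀ _ hz0.ne']
  have hsub : z - radialRetraction R z = ((‖z‖ - R) / R) • radialRetraction R z := by
    rw [radialRetraction, hmax, smul_smul]
    have : (‖z‖ - R) / R * (R / ‖z‖) = 1 - R / ‖z‖ := by field_simp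
    rw [this, sub_smul, one_smul]
  rw [hsub, real_inner_smul_right]
  exact mul_nonpos_of_nonneg_of_nonpos (div_nonneg (by linarith) hR.le) (hg _ hnorm.ge)

lemma exists_inner_apply_self_nonpos_of_dissipative {f : E → E} {C₁ C₂ : ℝ} (hC₂ : 0 < C₂)
    (hdis : ∀ x y, ⟪f x - f y, x - y⟫ ≤ C₁ - C₂ * ‖x - y‖ ^ 2) :
    ∃ R₀, ∀ y, R₀ ≤ ‖y‖ → ⟪f y, y⟫ ≤ 0 := by
  refine ⟨(|C₁| + ‖f 0‖) / C₂ + 1, fun y hy => ?_⟩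
  have hsplit : ⟪f y, y⟫ = ⟪f y - f 0, y⟫ + ⟪f 0, y⟫ := by
    rw [inner_sub_left]; ring
  have h0 : ⟪f 0, y⟫ ≤ ‖f 0‖ * ‖y‖ := real_inner_le_norm _ _
  have hy' : |C₁| + ‖f 0‖ + C₂ ≤ C₂ * ‖y‖ := by
    rw [div_add_one hC₂.ne', div_le_iff₀ hC₂] at hy; linarith
  have hy1 : 1 ≤ ‖y‖ := (le_add_of_nonneg_left (by positivity)).trans hy
  have := hdis y 0
  rw [sub_zero] at this
  nlinarith [le_abs_self C₁, mul_le_mul_of_nonneg_right hy' (norm_nonneg y),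
    mul_nonneg (abs_nonneg C₁) (sub_nonneg.mpr hy1), mul_pos hC₂ (zero_lt_one.trans_le hy1)]

lemma inner_comp_radialRetraction_sub_le {f : E → E} {A R : ℝ} (hR : 0 < R)
    (hA : ∀ x y, ⟪f x - f y, x - y⟫ ≤ A) (hsign : ∀ y, R ≤ ‖y‖ → ⟪f y, y⟫ ≤ 0)
    {y : E} (hy : ‖y‖ ≤ R) (z : E) :
    ⟪f (radialRetraction R z), z - y⟫ ≤ A + 2 * ‖f y‖ * ‖z - y‖ := by
  set p := radialRetraction R z
  have hp : ‖p - y‖ ≤ 2 * ‖z - y‖ := by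
    simpa [dist_eq_norm, radialRetraction_of_norm_le hy] using
      (lipschitzWith_radialRetraction (E := E) hR).dist_le_mul z y
  have hsplit : ⟪f p, z - y⟫ = ⟪f p - f y, p - y⟫ + ⟪f y, p - y⟫ + ⟪f p, z - p⟫ := by
    rw [show z - y = (p - y) + (z - p) by abel, inner_add_right, inner_sub_left]; ring
  have hfy : ⟪f y, p - y⟫ ≤ ‖f y‖ * (2 * ‖z - y‖) :=
    (real_inner_le_norm _ _).trans (mul_le_mul_of_nonneg_left hp (norm_nonneg _))
  linarith [hA p y, inner_sub_radialRetraction_nonpos hR hsign z]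

theorem IsIntegralSolution.norm_le_of_comp_radialRetraction [CompleteSpace E] {f : E → E}
    (hf : Continuous f) {A R M : ℝ} (hR : 0 < R) (hA : ∀ x y, ⟪f x - f y, x - y⟫ ≤ A)
    (hsign : ∀ y, R ≤ ‖y‖ → ⟪f y, y⟫ ≤ 0) {w u : C(Icc 0 T, E)}
    (hu : IsIntegralSolution hT (f ∘ radialRetraction R) w u) (hwR : ‖w‖ ≤ R)
    (hM : ∀ t, ‖f (w t)‖ ≤ M) :
    ‖u‖ ≤ ‖w‖ + √(gronwallBound 0 (2 * M) (2 * A + 2 * M) T) := by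
  have hA0 : 0 ≤ A := by simpa using hA 0 0
  have hM0 : 0 ≤ M := (norm_nonneg _).trans (hM ⟨0, left_mem_Icc.mpr hT⟩)
  have hg := hf.comp (lipschitzWith_radialRetraction (E := E) hR).continuous
  have henergy := hu.sq_norm_sub_le hg (B := 2 * M) hA0 (by positivity) fun t => by
    refine (inner_comp_radialRetraction_sub_le hR hA hsign
      ((w.norm_coe_le_norm t).trans hwR) (u t)).trans ?_
    gcongr
    exact hM t
  refine (ContinuousMap.norm_le _ (by positivity)).mpr fun t => ?_
  calc ‖u t‖ ≤ ‖w t‖ + ‖u t - w t‖ := norm_le_insert' _ _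
    _ ≤ _ := add_le_add (w.norm_coe_le_norm t)
        ((le_abs_self _).trans (Real.abs_le_sqrt (by simpa [two_mul, add_assoc] using henergy t)))

end Dissipative

section SolutionMap

variable {E : Type*} [NormedAddCommGroup E] [InnerProductSpace ℝ E] [ProperSpace E]
  {T : ℝ} {hT : 0 ≤ T} {f : E → E} {C₁ C₂ : ℝ}

/-- A single radius `B` works both as a truncation level and as a bound for the truncated
solutions, since the bound does not depend on the truncation level. -/
theorem exists_norm_le_of_isIntegralSolution_comp_radialRetraction (hf : Continuous f)
    (hC₂ : 0 < C₂) (hdis : ∀ x y, ⟪f x - f y, x - y⟫ ≤ C₁ - C₂ * ‖x - y‖ ^ 2) (r : ℝ) :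
    ∃ B, 0 < B ∧ ∀ R, B ≤ R → ∀ w u : C(Icc 0 T, E), ‖w‖ ≤ r →
      IsIntegralSolution hT (f ∘ radialRetraction R) w u → ‖u‖ ≤ B := by
  obtain ⟨R₀, hR₀⟩ := exists_inner_apply_self_nonpos_of_dissipative hC₂ hdis
  obtain ⟨M, hM⟩ := (isCompact_closedBall (0 : E) r).exists_bound_of_continuousOn hf.continuousOn
  set B := max (max R₀ 1) (r + √(gronwallBound 0 (2 * M) (2 * C₁ + 2 * M) T))
  have hrB : r ≤ B := (le_add_of_nonneg_right (Real.sqrt_nonneg _)).trans (le_max_right _ _)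
  refine ⟨B, zero_lt_one.trans_le ((le_max_right _ _).trans (le_max_left _ _)),
    fun R hR w u hw hu => ?_⟩
  have h1R : 1 ≤ R := ((le_max_right _ _).trans (le_max_left _ _)).trans hR
  have hR₀R : R₀ ≤ R := ((le_max_left _ _).trans (le_max_left _ _)).trans hR
  have hbound := hu.norm_le_of_comp_radialRetraction hf (A := C₁) (M := M)
    (zero_lt_one.trans_le h1R) (fun x y => (hdis x y).trans (sub_le_self _ (by positivity)))
    (fun y hy => hR₀ y (hR₀R.trans hy)) (hw.trans (hrB.trans hR))
    (fun t => hM _ (mem_closedBall_zero_iff.mpr ((w.norm_coe_le_norm t).trans hw)))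
  exact hbound.trans ((add_le_add_left hw _).trans (le_max_right _ _))

theorem exists_norm_le_of_isIntegralSolution (hf : Continuous f) (hC₂ : 0 < C₂)
    (hdis : ∀ x y, ⟪f x - f y, x - y⟫ ≤ C₁ - C₂ * ‖x - y‖ ^ 2) (r : ℝ) :
    ∃ B, ∀ w u : C(Icc 0 T, E), ‖w‖ ≤ r → IsIntegralSolution hT f w u → ‖u‖ ≤ B := by
  obtain ⟨B, -, hB⟩ :=
    exists_norm_le_of_isIntegralSolution_comp_radialRetraction (hT := hT) hf hC₂ hdis r
  refine ⟨B, fun w u hw hu => hB (max B ‖u‖) (le_max_left _ _) w u hw ?_⟩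
  refine (isIntegralSolution_congr fun t => ?_).mp hu
  rw [comp_apply, radialRetraction_of_norm_le ((u.norm_coe_le_norm t).trans (le_max_right _ _))]

theorem exists_isIntegralSolution (hf : LocallyLipschitz f) (hC₂ : 0 < C₂)
    (hdis : ∀ x y, ⟪f x - f y, x - y⟫ ≤ C₁ - C₂ * ‖x - y‖ ^ 2) (w : C(Icc 0 T, E)) :
    ∃ u, IsIntegralSolution hT f w u := by
  obtain ⟨B, hB0, hB⟩ := exists_norm_le_of_isIntegralSolution_comp_radialRetraction (hT := hT)
    hf.continuous hC₂ hdis ‖w‖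
  obtain ⟨L, hL⟩ :=
    hf.locallyLipschitzOn.exists_lipschitzOnWith_of_compact (isCompact_closedBall (0 : E) B)
  obtain ⟨u, hu⟩ := exists_isIntegralSolution_of_lipschitzWith (hL.comp_radialRetraction hB0) w
  have huB := hB B le_rfl w u le_rfl hu
  refine ⟨u, (isIntegralSolution_congr fun t => ?_).mpr hu⟩
  rw [comp_apply, radialRetraction_of_norm_le ((u.norm_coe_le_norm t).trans huB)]

theorem exists_dist_le_mul_of_isIntegralSolution (hf : LocallyLipschitz f) (hC₂ : 0 < C₂)
    (hdis : ∀ x y, ⟪f x - f y, x - y⟫ ≤ C₁ - C₂ * ‖x - y‖ ^ 2) (r : ℝ) :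
    ∃ K : ℝ≥0, ∀ w w' u u' : C(Icc 0 T, E), ‖w‖ ≤ r → ‖w'‖ ≤ r →
      IsIntegralSolution hT f w u → IsIntegralSolution hT f w' u' → dist u u' ≤ K * dist w w' := by
  obtain ⟨B, hB⟩ := exists_norm_le_of_isIntegralSolution (hT := hT) hf.continuous hC₂ hdis r
  obtain ⟨L, hL⟩ :=
    hf.locallyLipschitzOn.exists_lipschitzOnWith_of_compact (isCompact_closedBall (0 : E) B)
  exact ⟨⟨exp (L * T), (exp_pos _).le⟩, fun w w' u u' hw hw' hu hu' =>
    hu.dist_le hf.continuous hL hu' (hB w u hw hu) (hB w' u' hw' hu')⟩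

theorem exists_locallyLipschitz_solutionMap (hf : LocallyLipschitz f) (hC₂ : 0 < C₂)
    (hdis : ∀ x y, ⟪f x - f y, x - y⟫ ≤ C₁ - C₂ * ‖x - y‖ ^ 2) :
    ∃ S : C(Icc 0 T, E) → C(Icc 0 T, E), (∀ w, IsIntegralSolution hT f w (S w)) ∧
      (∀ w u, IsIntegralSolution hT f w u → u = S w) ∧ LocallyLipschitz S := by
  choose S hS using exists_isIntegralSolution (hT := hT) hf hC₂ hdis
  refine ⟨S, hS, fun w u hu => ?_, fun w => ?_⟩
  · obtain ⟨K, hK⟩ := exists_dist_le_mul_of_isIntegralSolution hf hC₂ hdis ‖w‖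
    exact dist_le_zero.mp (by simpa using hK w w u (S w) le_rfl le_rfl hu (hS w))
  · obtain ⟨K, hK⟩ := exists_dist_le_mul_of_isIntegralSolution hf hC₂ hdis (‖w‖ + 1)
    have hball : ∀ v ∈ ball w 1, ‖v‖ ≤ ‖w‖ + 1 := fun v hv => by
      rw [mem_ball, dist_eq_norm] at hv
      linarith [norm_sub_norm_le v w]
    exact ⟨K, ball w 1, ball_mem_nhds w one_pos, LipschitzOnWith.of_dist_le_mul fun v hv v' hv' =>
      hK v v' _ _ (hball v hv) (hball v' hv') (hS v) (hS v')⟩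

end SolutionMap

theorem stmt5_general (n : ℕ)
    (f : EuclideanSpace ℝ (Fin n) → EuclideanSpace ℝ (Fin n)) (hf : ContDiff ℝ 1 f)
    (C₁ C₂ C₃ C : ℝ) (hC₂ : 0 < C₂)
    (hA1 : ∀ x y : EuclideanSpace ℝ (Fin n),
      ⟪f x - f y, x - y⟫ ≤ min (C₁ - C₂ * ‖x - y‖ ^ 2) (C₃ * ‖x - y‖ ^ 2))
    (σ : Matrix (Fin n) (Fin n) ℝ) (T : ℝ) (hT : 0 < T) :
    ∃ Φ : EuclideanSpace ℝ (Fin n) × C(Set.Icc (0 : ℝ) T, EuclideanSpace ℝ (Fin n)) →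
        C(Set.Icc (0 : ℝ) T, EuclideanSpace ℝ (Fin n)),
      (∀ x b, b ⟨0, Set.left_mem_Icc.mpr hT.le⟩ = 0 →
        ∀ t : Set.Icc (0 : ℝ) T,
          Φ (x, b) t = Matrix.toEuclideanLin σ (b t) + x +
            ∫ s in (0 : ℝ)..(t : ℝ), f (Set.IccExtend hT.le (Φ (x, b)) s)) ∧
      LocallyLipschitz Φ ∧
      (∀ Φ' : EuclideanSpace ℝ (Fin n) × C(Set.Icc (0 : ℝ) T, EuclideanSpace ℝ (Fin n)) →
          C(Set.Icc (0 : ℝ) T, EuclideanSpace ℝ (Fin n)),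
        (∀ x b, b ⟨0, Set.left_mem_Icc.mpr hT.le⟩ = 0 →
          ∀ t : Set.Icc (0 : ℝ) T,
            Φ' (x, b) t = Matrix.toEuclideanLin σ (b t) + x +
              ∫ s in (0 : ℝ)..(t : ℝ), f (Set.IccExtend hT.le (Φ' (x, b)) s)) →
        ∀ x b, b ⟨0, Set.left_mem_Icc.mpr hT.le⟩ = 0 → Φ' (x, b) = Φ (x, b)) := by
  obtain ⟨S, hS, hS_unique, hS_lip⟩ := exists_locallyLipschitz_solutionMap (hT := hT.le)
    hf.locallyLipschitz hC₂ fun x y => (hA1 x y).trans (min_le_left _ _)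
  let W : EuclideanSpace ℝ (Fin n) × C(Icc (0 : ℝ) T, EuclideanSpace ℝ (Fin n)) →L[ℝ]
      C(Icc (0 : ℝ) T, EuclideanSpace ℝ (Fin n)) :=
    ((Matrix.toEuclideanLin σ).toContinuousLinearMap.compLeftContinuous ℝ _).comp (.snd ℝ _ _) +
      (ContinuousLinearMap.const ℝ _).comp (.fst ℝ _ _)
  exact ⟨S ∘ W, fun x b _ => hS (W (x, b)), hS_lip.comp W.lipschitz.locallyLipschitz,
    fun Φ' hΦ' x b hb => hS_unique _ _ (hΦ' x b hb)⟩

/-- Existence, uniqueness and local Lipschitz dependence for the pathwise solution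
map `Φ_T` of the ODE `Φ_T(x,b)(t) = σ b(t) + x + ∫₀ᵗ f(Φ_T(x,b)(s)) ds`, where
`b` ranges over the continuous functions on `[0,T]` vanishing at `0`. -/
theorem stmt5 (n : ℕ) (hn : 1 ≤ n)
    (f : EuclideanSpace ℝ (Fin n) → EuclideanSpace ℝ (Fin n)) (hf : ContDiff ℝ 1 f)
    (C₁ C₂ C₃ C N : ℝ) (hC₁ : 0 < C₁) (hC₂ : 0 < C₂) (hC₃ : 0 < C₃)
    (hC : 0 < C) (hN : 0 < N)
    (hA1 : ∀ x y : EuclideanSpace ℝ (Fin n),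
      ⟪f x - f y, x - y⟫ ≤ min (C₁ - C₂ * ‖x - y‖ ^ 2) (C₃ * ‖x - y‖ ^ 2))
    (hA2 : ∀ x : EuclideanSpace ℝ (Fin n),
      ‖f x‖ ≤ C * (1 + ‖x‖) ^ N ∧ ‖fderiv ℝ f x‖ ≤ C * (1 + ‖x‖) ^ N)
    (σ : Matrix (Fin n) (Fin n) ℝ) (T : ℝ) (hT : 0 < T) :
    ∃ Φ : EuclideanSpace ℝ (Fin n) × C(Set.Icc (0 : ℝ) T, EuclideanSpace ℝ (Fin n)) →
        C(Set.Icc (0 : ℝ) T, EuclideanSpace ℝ (Fin n)),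
      (∀ x b, b ⟨0, Set.left_mem_Icc.mpr hT.le⟩ = 0 →
        ∀ t : Set.Icc (0 : ℝ) T,
          Φ (x, b) t = Matrix.toEuclideanLin σ (b t) + x +
            ∫ s in (0 : ℝ)..(t : ℝ), f (Set.IccExtend hT.le (Φ (x, b)) s)) ∧
      LocallyLipschitz Φ ∧
      (∀ Φ' : EuclideanSpace ℝ (Fin n) × C(Set.Icc (0 : ℝ) T, EuclideanSpace ℝ (Fin n)) →
          C(Set.Icc (0 : ℝ) T, EuclideanSpace ℝ (Fin n)),
        (∀ x b, b ⟨0, Set.left_mem_Icc.mpr hT.le⟩ = 0 →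
          ∀ t : Set.Icc (0 : ℝ) T,
            Φ' (x, b) t = Matrix.toEuclideanLin σ (b t) + x +
              ∫ s in (0 : ℝ)..(t : ℝ), f (Set.IccExtend hT.le (Φ' (x, b)) s)) →
        ∀ x b, b ⟨0, Set.left_mem_Icc.mpr hT.le⟩ = 0 → Φ' (x, b) = Φ (x, b)) :=
  stmt5_general n f hf C₁ C₂ C₃ C hC₂ hA1 σ T hT
end

section
/- Let X and W be Polish spaces, let (P_t)_{t≥0} be a Feller transition semigroup on W, let (θ_t)_{t>0} be a semiflow of measurable maps on W satisfying θ_t^* P_t(w,·) = δ_w for every w ∈ W and t > 0, and let φ : [0,∞) × X × W → X satisfy: φ_0(x,w) = x; the cocycle property φ_{s+t}(x,w) = φ_s(φ_t(x, θ_s w), w) for all s,t > 0, x ∈ X, w ∈ W; and continuity of (x,w) ↦ φ_t(x,w) for each fixed t ≥ 0. Define Q_t(x,w; A×B) = ∫_B δ_{φ_t(x,w')}(A) P_t(w, dw') for Borel sets A ⊆ X, B ⊆ W. Then (Q_t)_{t≥0} is a Feller transition semigroup on X × W; moreover, if ν is an invariant probability measure of (P_t) and μ is a probability measure on X × W whose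 marginal on W equals ν, then the marginal of Q_t μ on W equals ν for every t ≥ 0. -/
/-!
`Q_t(x, w)` is the image of `δ_x ⊗ P_t(w)` under `(x, w') ↦ (φ_t(x, w'), w')`. Since products of
probability measures and pushforwards along continuous maps are weakly continuous, the Feller
property of `P_t` passes to `Q_t`. For Chapman–Kolmogorov, `θ_s` pushes `P_s(w')` to `δ_{w'}`,
so `θ_s w'' = w'` for `P_s(w')`-a.e. `w''`, and there the cocycle identity reads
`φ_{s+t}(x, w'') = φ_s(φ_t(x, w'), w'')`; integrating against `P_t(w, dw')` and using
`P_{s+t} = P_t P_s` gives `Q_{s+t} = Q_t Q_s`. Finally the `W`-marginal of `Q_t(x, w)` is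
`P_t(w)`, so the `W`-marginal of `Q_t μ` is `P_t` applied to that of `μ`.
-/

open MeasureTheory Set
open scoped NNReal ENNReal

noncomputable def QKer {X W : Type*} [MeasurableSpace X] [MeasurableSpace W]
    (φ : ℝ≥0 → X → W → X) (P : ℝ≥0 → W → Measure W) (t : ℝ≥0) (z : X × W) :
    Measure (X × W) :=
  (P t z.2).map fun w' => (φ t z.1 w', w')

open ProbabilityTheory

namespace MeasureTheory.Measure
variable {α β γ : Type*} [MeasurableSpace α] [MeasurableSpace β] [MeasurableSpace γ]

lemma map_bind_of_measurable (m : Measure α) {κ : α → Measure β} (hκ : Measurable κ)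
    {f : β → γ} (hf : Measurable f) :
    (m.bind κ).map f = m.bind fun a => (κ a).map f := by
  have hdirac : Measurable fun b => dirac (f b) := measurable_dirac.comp hf
  rw [← bind_dirac_eq_map _ hf, bind_bind hκ.aemeasurable hdirac.aemeasurable]
  simp_rw [bind_dirac_eq_map _ hf]

lemma bind_map_of_measurable (m : Measure α) {g : α → β} (hg : Measurable g)
    {κ : β → Measure γ} (hκ : Measurable κ) :
    (m.map g).bind κ = m.bind (κ ∘ g) := by
  ext s hs
  rw [bind_apply hs hκ.aemeasurable, bind_apply hs (hκ.comp hg).aemeasurable]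
  exact lintegral_map ((measurable_coe hs).comp hκ) hg

lemma ae_eq_of_map_eq_dirac [MeasurableSingletonClass β] {μ : Measure α} {f : α → β}
    (hf : Measurable f) {b : β} (h : μ.map f = dirac b) : ∀ᵐ a ∂μ, f a = b :=
  ae_of_ae_map hf.aemeasurable (by rw [h]; exact (ae_dirac_iff (measurableSet_singleton b)).2 rfl)

end MeasureTheory.Measure

namespace ProbabilityTheory.Kernel

lemma measurable_map_of_measurable_uncurry {X W V Y : Type*} [MeasurableSpace X]
    [MeasurableSpace W] [MeasurableSpace V] [MeasurableSpace Y] (κ : Kernel W V)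
    [IsSFiniteKernel κ] {g : X → V → Y} (hg : Measurable (Function.uncurry g)) :
    Measurable fun z : X × W => (κ z.2).map (g z.1) := by
  have h : ∀ z : X × W, (κ z.2).map (g z.1)
      = (deterministic Prod.fst measurable_fst ×ₖ κ.prodMkLeft X).map (Function.uncurry g) z := by
    intro z
    rw [map_apply _ hg, prod_apply, deterministic_apply, prodMkLeft_apply, Measure.dirac_prod,
      Measure.map_map hg measurable_prodMk_left]
    rfl
  simp_rw [h]
  exact Kernel.measurable _

end ProbabilityTheory.Kernel

namespace MeasureTheory.ProbabilityMeasure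

open TopologicalSpace in
lemma continuous_integral_prodMk {X W V : Type*} [TopologicalSpace X] [TopologicalSpace W]
    [TopologicalSpace V] [MeasurableSpace X] [MeasurableSpace V]
    [SecondCountableTopology X] [SecondCountableTopology V]
    [PseudoMetrizableSpace X] [PseudoMetrizableSpace V]
    [OpensMeasurableSpace X] [OpensMeasurableSpace V]
    {ν : W → ProbabilityMeasure V} (hν : Continuous ν) (F : BoundedContinuousFunction (X × V) ℝ) :
    Continuous fun z : X × W => ∫ v, F (z.1, v) ∂(ν z.2) := by
  have h : ∀ z : X × W,
      ∫ v, F (z.1, v) ∂(ν z.2) = ∫ p, F p ∂((diracProba z.1).prod (ν z.2)) := by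
    intro z
    rw [toMeasure_prod, diracProba, coe_mk, Measure.dirac_prod,
      integral_map measurable_prodMk_left.aemeasurable F.continuous.aestronglyMeasurable]
  simp_rw [h]
  exact (continuous_integral_boundedContinuousFunction F).comp
    (continuous_prod.comp
      ((continuous_diracProba.comp continuous_fst).prodMk (hν.comp continuous_snd)))

end MeasureTheory.ProbabilityMeasure

section QKer

variable {X W : Type*} [MeasurableSpace X] [MeasurableSpace W]
  {P : ℝ≥0 → W → Measure W} {φ : ℝ≥0 → X → W → X}

lemma measurable_graph_slice {t : ℝ≥0} (hφ : Measurable fun p : X × W => φ t p.1 p.2) (x : X) :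
    Measurable fun w' => (φ t x w', w') :=
  (hφ.comp measurable_prodMk_left).prodMk measurable_id

lemma measurable_QKer {t : ℝ≥0} (hP : Measurable (P t))
    (hP1 : ∀ w, IsProbabilityMeasure (P t w))
    (hφ : Measurable fun p : X × W => φ t p.1 p.2) :
    Measurable (QKer φ P t) :=
  haveI : IsMarkovKernel (⟨P t, hP⟩ : Kernel W W) := ⟨hP1⟩
  Kernel.measurable_map_of_measurable_uncurry (g := fun x w' => (φ t x w', w')) ⟨P t, hP⟩
    (hφ.prodMk measurable_snd)

lemma isProbabilityMeasure_QKer {t : ℝ≥0} (hP1 : ∀ w, IsProbabilityMeasure (P t w))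
    (hφ : Measurable fun p : X × W => φ t p.1 p.2) (z : X × W) :
    IsProbabilityMeasure (QKer φ P t z) :=
  Measure.isProbabilityMeasure_map (measurable_graph_slice hφ z.1).aemeasurable

lemma QKer_zero (hP0 : ∀ w, P 0 w = Measure.dirac w) (hφ0 : ∀ x w, φ 0 x w = x) (z : X × W) :
    QKer φ P 0 z = Measure.dirac z := by
  simp only [QKer, hP0, hφ0]
  exact Measure.map_dirac' measurable_prodMk_left _

lemma map_snd_QKer {t : ℝ≥0} (hφ : Measurable fun p : X × W => φ t p.1 p.2) (z : X × W) :
    (QKer φ P t z).map Prod.snd = P t z.2 := by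
  rw [QKer, Measure.map_map measurable_snd (measurable_graph_slice hφ z.1)]
  exact Measure.map_id

lemma map_snd_bind_QKer {t : ℝ≥0} (hP1 : ∀ w, IsProbabilityMeasure (P t w))
    (hP : Measurable (P t))
    (hφ : Measurable fun p : X × W => φ t p.1 p.2) (μ : Measure (X × W)) :
    (μ.bind (QKer φ P t)).map Prod.snd = (μ.map Prod.snd).bind (P t) := by
  rw [Measure.map_bind_of_measurable μ (measurable_QKer hP hP1 hφ) measurable_snd,
    Measure.bind_map_of_measurable μ measurable_snd hP]
  simp_rw [map_snd_QKer hφ]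
  rfl

lemma QKer_add_of_cocycle [MeasurableSingletonClass W] {θ : ℝ≥0 → W → W} {s t : ℝ≥0}
    (hPs : Measurable (P s)) (hP1 : ∀ w, IsProbabilityMeasure (P s w))
    (hPsemi : ∀ w, P (s + t) w = (P t w).bind (P s))
    (hθ : Measurable (θ s)) (hθP : ∀ w, (P s w).map (θ s) = Measure.dirac w)
    (hφ : ∀ r, Measurable fun p : X × W => φ r p.1 p.2)
    (hφcocycle : ∀ x w, φ (s + t) x w = φ s (φ t x (θ s w)) w) (z : X × W) :
    QKer φ P (s + t) z = (QKer φ P t z).bind (QKer φ P s) := by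
  have hstep : ∀ w', (P s w').map (fun w'' => (φ (s + t) z.1 w'', w''))
      = QKer φ P s (φ t z.1 w', w') := by
    intro w'
    refine Measure.map_congr ?_
    filter_upwards [Measure.ae_eq_of_map_eq_dirac hθ (hθP w')] with w'' hw''
    rw [hφcocycle, hw'']
  calc QKer φ P (s + t) z
      = (P t z.2).bind fun w' => (P s w').map fun w'' => (φ (s + t) z.1 w'', w'') := by
        rw [QKer, hPsemi, Measure.map_bind_of_measurable _ hPs (measurable_graph_slice (hφ _) _)]
    _ = (QKer φ P t z).bind (QKer φ P s) := by
        simp_rw [hstep]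
        exact (Measure.bind_map_of_measurable _ (measurable_graph_slice (hφ t) z.1)
          (measurable_QKer hPs hP1 (hφ s))).symm

lemma QKer_add [MeasurableSingletonClass W] {θ : ℝ≥0 → W → W}
    (hP : ∀ t, Measurable (P t)) (hP1 : ∀ t w, IsProbabilityMeasure (P t w))
    (hP0 : ∀ w, P 0 w = Measure.dirac w)
    (hPsemi : ∀ s t : ℝ≥0, ∀ w, P (s + t) w = (P t w).bind (P s))
    (hθ : ∀ t, Measurable (θ t)) (hθP : ∀ t w, (P t w).map (θ t) = Measure.dirac w)
    (hφ0 : ∀ x w, φ 0 x w = x) (hφ : ∀ t, Measurable fun p : X × W => φ t p.1 p.2)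
    (hφcocycle : ∀ s t : ℝ≥0, 0 < s → 0 < t → ∀ x w,
      φ (s + t) x w = φ s (φ t x (θ s w)) w)
    (s t : ℝ≥0) (z : X × W) :
    QKer φ P (s + t) z = (QKer φ P t z).bind (QKer φ P s) := by
  rcases eq_zero_or_pos s with rfl | hs
  · rw [zero_add, funext (QKer_zero hP0 hφ0), Measure.bind_dirac]
  rcases eq_zero_or_pos t with rfl | ht
  · rw [add_zero, QKer_zero hP0 hφ0,
      Measure.dirac_bind (measurable_QKer (hP s) (hP1 s) (hφ s))]
  exact QKer_add_of_cocycle (hP s) (hP1 s) (hPsemi s t) (hθ s) (hθP s) hφ (hφcocycle s t hs ht) z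

open TopologicalSpace in
lemma continuous_integral_QKer [TopologicalSpace X] [TopologicalSpace W]
    [SecondCountableTopology X] [SecondCountableTopology W]
    [PseudoMetrizableSpace X] [PseudoMetrizableSpace W] [BorelSpace X] [OpensMeasurableSpace W]
    {t : ℝ≥0} (hP1 : ∀ w, IsProbabilityMeasure (P t w))
    (hPFeller : ∀ ψ : BoundedContinuousFunction W ℝ, Continuous fun w => ∫ y, ψ y ∂(P t w))
    (hφ : Continuous fun p : X × W => φ t p.1 p.2) (ψ : BoundedContinuousFunction (X × W) ℝ) :
    Continuous fun z => ∫ y, ψ y ∂(QKer φ P t z) := by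
  let Φ : C(X × W, X × W) := ⟨fun p => (φ t p.1 p.2, p.2), hφ.prodMk continuous_snd⟩
  have h : ∀ z, ∫ y, ψ y ∂(QKer φ P t z) = ∫ w', ψ.compContinuous Φ (z.1, w') ∂(P t z.2) :=
    fun z => integral_map (measurable_graph_slice hφ.measurable z.1).aemeasurable
      ψ.continuous.aestronglyMeasurable
  simp_rw [h]
  exact ProbabilityMeasure.continuous_integral_prodMk (ν := fun w => ⟨P t w, hP1 w⟩)
    (ProbabilityMeasure.continuous_iff_forall_continuous_integral.2 hPFeller) _

end QKer

theorem stmt6_general {X W : Type*}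
    [TopologicalSpace X] [PolishSpace X] [MeasurableSpace X] [BorelSpace X]
    [TopologicalSpace W] [PolishSpace W] [MeasurableSpace W] [BorelSpace W]
    (P : ℝ≥0 → W → Measure W)
    (hPmeas : ∀ t, Measurable (P t))
    (hPprob : ∀ t w, IsProbabilityMeasure (P t w))
    (hP0 : ∀ w, P 0 w = Measure.dirac w)
    (hPsemi : ∀ s t : ℝ≥0, ∀ w, P (s + t) w = (P t w).bind (P s))
    (hPFeller : ∀ (t : ℝ≥0) (ψ : BoundedContinuousFunction W ℝ),
      Continuous fun w => ∫ y, ψ y ∂(P t w))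
    (θ : ℝ≥0 → W → W)
    (hθmeas : ∀ t, Measurable (θ t))
    (hθP : ∀ (t : ℝ≥0) (w : W), (P t w).map (θ t) = Measure.dirac w)
    (φ : ℝ≥0 → X → W → X)
    (hφ0 : ∀ x w, φ 0 x w = x)
    (hφcocycle : ∀ s t : ℝ≥0, 0 < s → 0 < t → ∀ x w,
      φ (s + t) x w = φ s (φ t x (θ s w)) w)
    (hφcont : ∀ t : ℝ≥0, Continuous fun p : X × W => φ t p.1 p.2) :
    (∀ t, Measurable (QKer φ P t)) ∧
    (∀ t z, IsProbabilityMeasure (QKer φ P t z)) ∧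
    (∀ z, QKer φ P 0 z = Measure.dirac z) ∧
    (∀ s t : ℝ≥0, ∀ z, QKer φ P (s + t) z = (QKer φ P t z).bind (QKer φ P s)) ∧
    (∀ (t : ℝ≥0) (ψ : BoundedContinuousFunction (X × W) ℝ),
      Continuous fun z => ∫ y, ψ y ∂(QKer φ P t z)) ∧
    (∀ ν : Measure W, IsProbabilityMeasure ν → (∀ t, ν.bind (P t) = ν) →
      ∀ μ : Measure (X × W), IsProbabilityMeasure μ → μ.map Prod.snd = ν →
        ∀ t, (μ.bind (QKer φ P t)).map Prod.snd = ν) := by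
  have hφmeas : ∀ t, Measurable fun p : X × W => φ t p.1 p.2 := fun t => (hφcont t).measurable
  refine ⟨fun t => measurable_QKer (hPmeas t) (hPprob t) (hφmeas t),
    fun t => isProbabilityMeasure_QKer (hPprob t) (hφmeas t), QKer_zero hP0 hφ0,
    QKer_add hPmeas hPprob hP0 hPsemi hθmeas hθP hφ0 hφmeas hφcocycle,
    fun t => continuous_integral_QKer (hPprob t) (hPFeller t) (hφcont t), ?_⟩
  intro ν _ hinv μ _ hμ t
  rw [map_snd_bind_QKer (hPprob t) (hPmeas t) (hφmeas t), hμ, hinv]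

/-- Lemma 2.14: given a stationary noise process `(W, P_t, θ_t)` and a cocycle `φ`,
the family `Q_t` is a Feller transition semigroup on `X × W`, and it preserves the
class of measures whose `W`-marginal is the invariant measure of `P_t`. -/
theorem stmt6 {X W : Type*}
    [TopologicalSpace X] [PolishSpace X] [MeasurableSpace X] [BorelSpace X]
    [TopologicalSpace W] [PolishSpace W] [MeasurableSpace W] [BorelSpace W]
    (P : ℝ≥0 → W → Measure W)
    (hPmeas : ∀ t, Measurable (P t))
    (hPprob : ∀ t w, IsProbabilityMeasure (P t w))
    (hP0 : ∀ w, P 0 w = Measure.dirac w)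
    (hPsemi : ∀ s t : ℝ≥0, ∀ w, P (s + t) w = (P t w).bind (P s))
    (hPFeller : ∀ (t : ℝ≥0) (ψ : BoundedContinuousFunction W ℝ),
      Continuous fun w => ∫ y, ψ y ∂(P t w))
    (θ : ℝ≥0 → W → W)
    (hθmeas : ∀ t, Measurable (θ t))
    (hθsemi : ∀ s t : ℝ≥0, 0 < s → 0 < t → θ (s + t) = θ s ∘ θ t)
    (hθP : ∀ (t : ℝ≥0) (w : W), (P t w).map (θ t) = Measure.dirac w)
    (φ : ℝ≥0 → X → W → X)
    (hφ0 : ∀ x w, φ 0 x w = x)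
    (hφcocycle : ∀ s t : ℝ≥0, 0 < s → 0 < t → ∀ x w,
      φ (s + t) x w = φ s (φ t x (θ s w)) w)
    (hφcont : ∀ t : ℝ≥0, Continuous fun p : X × W => φ t p.1 p.2) :
    (∀ t, Measurable (QKer φ P t)) ∧
    (∀ t z, IsProbabilityMeasure (QKer φ P t z)) ∧
    (∀ z, QKer φ P 0 z = Measure.dirac z) ∧
    (∀ s t : ℝ≥0, ∀ z, QKer φ P (s + t) z = (QKer φ P t z).bind (QKer φ P s)) ∧
    (∀ (t : ℝ≥0) (ψ : BoundedContinuousFunction (X × W) ℝ),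
      Continuous fun z => ∫ y, ψ y ∂(QKer φ P t z)) ∧
    (∀ ν : Measure W, IsProbabilityMeasure ν → (∀ t, ν.bind (P t) = ν) →
      ∀ μ : Measure (X × W), IsProbabilityMeasure μ → μ.map Prod.snd = ν →
        ∀ t, (μ.bind (QKer φ P t)).map Prod.snd = ν) :=
  stmt6_general P hPmeas hPprob hP0 hPsemi hPFeller θ hθmeas hθP φ hφ0 hφcocycle hφcont
end

section
/- Let H ∈ (0,1), H ≠ 1/2, t₀ ∈ ℝ, and let g : ℝ → ℝⁿ be a continuous function vanishing on (t₀, ∞) and satisfying ∫_{−∞}^{t₀} (1 + |s|)^{H−1/2} ‖g(s)‖ ds < ∞ and ∫_{−∞}^{t₀} (t₀ − s + 1)^{H−3/2} ‖g(s)‖ ds < ∞. Then for every t > t₀ the function F(u) = ∫_{−∞}^{u} (u − s)^{H−1/2} g(s) ds is differentiable at t, with derivative F′(t) = (H − 1/2) ∫_{−∞}^{t₀} (t − s)^{H−3/2} g(s) ds. -/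
/-!
For `u > t₀` the upper limit of integration may be frozen at `t₀`, so `F` becomes a parametric
integral `∫_{-∞}^{t₀} (u - s)^p g(s) ds` with `p = H - 1/2`, whose integrand is smooth in `u`.
It is integrable at `u = t` because `t - s` and `1 + |s|` are comparable on `(-∞, t₀]`; and for
`u` near `t` the `u`-derivative `p (u - s)^{p-1} g(s)` is dominated by a multiple of
`(t₀ - s + 1)^{p-1} ‖g(s)‖` since `p - 1 < 0` and `u - s` stays a fixed distance above `t₀ - s`.
Differentiation under the integral sign then gives the formula.
-/

open MeasureTheory Set Filter Topology

variable {E : Type*} [NormedAddCommGroup E] [NormedSpace ℝ E]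

theorem setIntegral_Iic_eq_of_eq_zero_of_lt {f : ℝ → E} {a u : ℝ} (hau : a ≤ u)
    (hf : ∀ s, a < s → f s = 0) :
    ∫ s in Iic u, f s = ∫ s in Iic a, f s :=
  setIntegral_eq_of_subset_of_forall_sdiff_eq_zero measurableSet_Iic (Iic_subset_Iic.mpr hau)
    fun s hs => hf s (not_le.mp hs.2)

theorem Real.rpow_le_rpow_mul_of_le_mul_of_le_mul {x y c : ℝ} (p : ℝ) (hx : 0 < x) (hy : 0 < y)
    (hc : 1 ≤ c) (hxy : x ≤ c * y) (hyx : y ≤ c * x) :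
    x ^ p ≤ c ^ |p| * y ^ p := by
  have hc0 : 0 < c := one_pos.trans_le hc
  rcases le_or_gt 0 p with hp | hp
  · calc x ^ p ≤ (c * y) ^ p := Real.rpow_le_rpow hx.le hxy hp
      _ = c ^ p * y ^ p := Real.mul_rpow hc0.le hy.le
      _ = c ^ |p| * y ^ p := by rw [abs_of_nonneg hp]
  · have hyx' : y / c ≤ x := by rwa [div_le_iff₀ hc0, mul_comm]
    calc x ^ p ≤ (y / c) ^ p := Real.rpow_le_rpow_of_nonpos (by positivity) hyx' hp.le
      _ = c ^ |p| * y ^ p := by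
        rw [Real.div_rpow hy.le hc0.le, abs_of_neg hp, Real.rpow_neg hc0.le, div_eq_inv_mul]

theorem exists_sub_le_mul_one_add_abs_and_le {t₀ t : ℝ} (ht : t₀ < t) :
    ∃ c ≥ 1, ∀ s ≤ t₀, t - s ≤ c * (1 + |s|) ∧ 1 + |s| ≤ c * (t - s) := by
  refine ⟨max (1 + |t|) (max ((1 + |t₀|) / (t - t₀)) 1), ?_, fun s hs => ⟨?_, ?_⟩⟩
  · exact (le_max_right _ _).trans (le_max_right _ _)
  · calc t - s ≤ |t| + |s| := by linarith [le_abs_self t, neg_abs_le s]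
      _ ≤ (1 + |t|) * (1 + |s|) := by nlinarith [abs_nonneg t, abs_nonneg s]
      _ ≤ _ := mul_le_mul_of_nonneg_right (le_max_left _ _) (by positivity)
  · set c := max (1 + |t|) (max ((1 + |t₀|) / (t - t₀)) 1)
    have hc1 : 1 ≤ c := (le_max_right _ _).trans (le_max_right _ _)
    have hct₀ : 1 + |t₀| ≤ c * (t - t₀) := by
      rw [← div_le_iff₀ (sub_pos.mpr ht)]
      exact (le_max_left _ _).trans (le_max_right _ _)
    have hs' : |s| ≤ |t₀| + (t₀ - s) := by
      have := abs_sub_abs_le_abs_sub s t₀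
      rw [abs_of_nonpos (sub_nonpos.mpr hs)] at this
      linarith
    nlinarith [sub_nonneg.mpr hs]

theorem Real.rpow_sub_le_of_nonpos {q ε t₀ s u : ℝ} (hq : q ≤ 0) (hε : 0 < ε) (hs : s ≤ t₀)
    (hu : t₀ + ε ≤ u) :
    (u - s) ^ q ≤ min ε 1 ^ q * (t₀ - s + 1) ^ q := by
  have hδ : 0 < min ε 1 := lt_min hε one_pos
  have hle : min ε 1 * (t₀ - s + 1) ≤ u - s := by
    nlinarith [min_le_left ε 1, min_le_right ε 1, sub_nonneg.mpr hs]
  calc (u - s) ^ q ≤ (min ε 1 * (t₀ - s + 1)) ^ q :=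
        Real.rpow_le_rpow_of_nonpos (by nlinarith) hle hq
    _ = min ε 1 ^ q * (t₀ - s + 1) ^ q := Real.mul_rpow hδ.le (by linarith)

theorem hasDerivAt_rpow_sub_smul {p s u : ℝ} (v : E) (hsu : s < u) :
    HasDerivAt (fun x => (x - s) ^ p • v) ((p * (u - s) ^ (p - 1)) • v) u := by
  simpa using (((hasDerivAt_id u).sub_const s).rpow_const (p := p)
    (Or.inl (sub_pos.mpr hsu).ne')).smul_const v

section RiemannLiouville

variable {g : ℝ → E} {p t₀ : ℝ}

theorem aestronglyMeasurable_rpow_sub_smul (hg : AEStronglyMeasurable g (volume.restrict (Iic t₀)))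
    (q u : ℝ) :
    AEStronglyMeasurable (fun s => (u - s) ^ q • g s) (volume.restrict (Iic t₀)) :=
  (by fun_prop : Measurable fun s : ℝ => (u - s) ^ q).aestronglyMeasurable.smul hg

theorem integrableOn_rpow_sub_smul (hg : AEStronglyMeasurable g (volume.restrict (Iic t₀)))
    (hint : IntegrableOn (fun s => (1 + |s|) ^ p * ‖g s‖) (Iic t₀)) {t : ℝ} (ht : t₀ < t) :
    IntegrableOn (fun s => (t - s) ^ p • g s) (Iic t₀) := by
  obtain ⟨c, hc, hcomp⟩ := exists_sub_le_mul_one_add_abs_and_le ht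
  refine (hint.const_mul (c ^ |p|)).mono' (aestronglyMeasurable_rpow_sub_smul hg p t) ?_
  refine (ae_restrict_iff' measurableSet_Iic).mpr (Eventually.of_forall fun s hs => ?_)
  have hts : 0 < t - s := by linarith [mem_Iic.mp hs]
  rw [norm_smul, Real.norm_of_nonneg (Real.rpow_nonneg hts.le _), ← mul_assoc]
  exact mul_le_mul_of_nonneg_right (Real.rpow_le_rpow_mul_of_le_mul_of_le_mul p hts
    (by positivity) hc (hcomp s hs).1 (hcomp s hs).2) (norm_nonneg _)

theorem hasDerivAt_integral_Iic_rpow_sub_smul (hp : p ≤ 1)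
    (hg : AEStronglyMeasurable g (volume.restrict (Iic t₀)))
    (hint : IntegrableOn (fun s => (1 + |s|) ^ p * ‖g s‖) (Iic t₀))
    (hint' : IntegrableOn (fun s => (t₀ - s + 1) ^ (p - 1) * ‖g s‖) (Iic t₀)) {t : ℝ}
    (ht : t₀ < t) :
    HasDerivAt (fun u => ∫ s in Iic t₀, (u - s) ^ p • g s)
      (p • ∫ s in Iic t₀, (t - s) ^ (p - 1) • g s) t := by
  set ε := (t - t₀) / 2 with hε_def
  have hε : 0 < ε := half_pos (sub_pos.mpr ht)
  have hnhds : Ioi (t₀ + ε) ∈ 𝓝 t := Ioi_mem_nhds (by linarith)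
  have hbound : ∀ᵐ s ∂volume.restrict (Iic t₀), ∀ u ∈ Ioi (t₀ + ε),
      ‖(p * (u - s) ^ (p - 1)) • g s‖ ≤
        |p| * min ε 1 ^ (p - 1) * ((t₀ - s + 1) ^ (p - 1) * ‖g s‖) := by
    refine (ae_restrict_iff' measurableSet_Iic).mpr (Eventually.of_forall fun s hs u hu => ?_)
    have hus : 0 < u - s := by linarith [mem_Iic.mp hs, mem_Ioi.mp hu]
    rw [norm_smul, norm_mul, Real.norm_eq_abs, Real.norm_of_nonneg (Real.rpow_nonneg hus.le _)]
    calc |p| * (u - s) ^ (p - 1) * ‖g s‖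
        ≤ |p| * (min ε 1 ^ (p - 1) * (t₀ - s + 1) ^ (p - 1)) * ‖g s‖ := by
          gcongr
          exact Real.rpow_sub_le_of_nonpos (by linarith) hε hs (mem_Ioi.mp hu).le
      _ = _ := by ring
  have hdiff : ∀ᵐ s ∂volume.restrict (Iic t₀), ∀ u ∈ Ioi (t₀ + ε),
      HasDerivAt (fun x => (x - s) ^ p • g s) ((p * (u - s) ^ (p - 1)) • g s) u := by
    refine (ae_restrict_iff' measurableSet_Iic).mpr (Eventually.of_forall fun s hs u hu => ?_)
    exact hasDerivAt_rpow_sub_smul (g s) (by linarith [mem_Iic.mp hs, mem_Ioi.mp hu])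
  have key := hasDerivAt_integral_of_dominated_loc_of_deriv_le hnhds
    (Eventually.of_forall (aestronglyMeasurable_rpow_sub_smul hg p))
    (integrableOn_rpow_sub_smul hg hint ht)
    ((aestronglyMeasurable_rpow_sub_smul hg (p - 1) t).const_smul p |>.congr
      (Eventually.of_forall fun s => smul_smul p _ (g s)))
    hbound (hint'.const_mul _) hdiff
  simpa only [← smul_smul, integral_smul] using key.2

end RiemannLiouville

theorem stmt9_general (n : ℕ) (H t₀ : ℝ) (hH : H ∈ Set.Ioo (0 : ℝ) 1)
    (g : ℝ → EuclideanSpace ℝ (Fin n)) (hg : Continuous g)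
    (hgvanish : ∀ s : ℝ, t₀ < s → g s = 0)
    (hint1 : IntegrableOn (fun s => (1 + |s|) ^ (H - 1 / 2) * ‖g s‖) (Set.Iic t₀))
    (hint2 : IntegrableOn (fun s => (t₀ - s + 1) ^ (H - 3 / 2) * ‖g s‖) (Set.Iic t₀)) :
    ∀ t : ℝ, t₀ < t →
      HasDerivAt (fun u : ℝ => ∫ s in Set.Iic u, ((u - s) ^ (H - 1 / 2)) • g s)
        ((H - 1 / 2) • ∫ s in Set.Iic t₀, ((t - s) ^ (H - 3 / 2)) • g s) t := by
  intro t ht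
  have hexp : H - 1 / 2 - 1 = H - 3 / 2 := by ring
  have hderiv := hasDerivAt_integral_Iic_rpow_sub_smul (p := H - 1 / 2) (by linarith [hH.2])
    hg.aestronglyMeasurable hint1 (hexp ▸ hint2) ht
  rw [hexp] at hderiv
  refine hderiv.congr_of_eventuallyEq ?_
  filter_upwards [Ioi_mem_nhds ht] with u hu
  exact setIntegral_Iic_eq_of_eq_zero_of_lt hu.le fun s hs => by rw [hgvanish s hs, smul_zero]

/-- Differentiation of `F(u) = ∫_{-∞}^u (u-s)^{H-1/2} g(s) ds` for `g` vanishing on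
`(t₀,∞)`: for `t > t₀`, `F'(t) = (H-1/2) ∫_{-∞}^{t₀} (t-s)^{H-3/2} g(s) ds`. -/
theorem stmt9 (n : ℕ) (H t₀ : ℝ) (hH : H ∈ Set.Ioo (0 : ℝ) 1) (hH2 : H ≠ 1 / 2)
    (g : ℝ → EuclideanSpace ℝ (Fin n)) (hg : Continuous g)
    (hgvanish : ∀ s : ℝ, t₀ < s → g s = 0)
    (hint1 : IntegrableOn (fun s => (1 + |s|) ^ (H - 1 / 2) * ‖g s‖) (Set.Iic t₀))
    (hint2 : IntegrableOn (fun s => (t₀ - s + 1) ^ (H - 3 / 2) * ‖g s‖) (Set.Iic t₀)) :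
    ∀ t : ℝ, t₀ < t →
      HasDerivAt (fun u : ℝ => ∫ s in Set.Iic u, ((u - s) ^ (H - 1 / 2)) • g s)
        ((H - 1 / 2) • ∫ s in Set.Iic t₀, ((t - s) ^ (H - 3 / 2)) • g s) t :=
  stmt9_general n H t₀ hH g hg hgvanish hint1 hint2
end

section
/- Let H ∈ (0,1) and let r < t₂ < t be real numbers. Then (H + 1/2) ∫_r^{t₂} (t − s)^{−H−3/2} (s − r)^{H−1/2} ds = (t − t₂)^{−H−1/2} (t₂ − r)^{H−1/2} − (t − t₂)^{1/2−H} (t₂ − r)^{H−1/2} / (t − r). Equivalently, the kernel K(t,r) := (t − t₂)^{−H−1/2}(t₂ − r)^{H−1/2} − (H + 1/2) ∫_r^{t₂} (t − s)^{−H−3/2} (s − r)^{H−1/2} ds equals (t − t₂)^{1/2−H} (t₂ − r)^{H−1/2} / (t − r). -/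
open MeasureTheory Set

/-! `s ↦ (t - s)^(-a) (s - r)^a` is a primitive of `a (t - r) (t - s)^(-a-1) (s - r)^(a-1)` on
`(r, t)` and vanishes at `s = r` when `a > 0`, so the integral is evaluated by the fundamental
theorem of calculus; the stated form then follows by splitting `t₂ - r = (t - r) - (t - t₂)`. -/

namespace Real

variable {a r t : ℝ}

theorem hasDerivAt_rpow_neg_mul_rpow {s : ℝ} (hrs : r < s) (hst : s < t) :
    HasDerivAt (fun x => (t - x) ^ (-a) * (x - r) ^ a)
      (a * (t - r) * ((t - s) ^ (-a - 1) * (s - r) ^ (a - 1))) s := by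
  have hts : t - s ≠ 0 := (sub_pos.2 hst).ne'
  have hsr : s - r ≠ 0 := (sub_pos.2 hrs).ne'
  have hleft := ((hasDerivAt_id s).const_sub t).rpow_const (p := -a) (Or.inl hts)
  have hright := ((hasDerivAt_id s).sub_const r).rpow_const (p := a) (Or.inl hsr)
  refine (hleft.mul hright).congr_deriv ?_
  simp only [id_eq, rpow_sub_one hts, rpow_sub_one hsr]
  field_simp
  ring

theorem intervalIntegrable_rpow_sub_mul_rpow_sub {b c u : ℝ} (hb : -1 < b) (hru : r ≤ u)
    (hut : u < t) :
    IntervalIntegrable (fun s => (t - s) ^ c * (s - r) ^ b) volume r u := by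
  have hpow : IntervalIntegrable (fun s => (s - r) ^ b) volume r u := by
    simpa using
      (intervalIntegral.intervalIntegrable_rpow' (a := 0) (b := u - r) hb).comp_sub_right r
  refine hpow.continuousOn_mul (ContinuousOn.rpow_const (by fun_prop) fun s hs => Or.inl ?_)
  rw [uIcc_of_le hru] at hs
  exact (sub_pos.2 (hs.2.trans_lt hut)).ne'

theorem integral_rpow_sub_mul_rpow_sub {u : ℝ} (ha : 0 < a) (hru : r ≤ u) (hut : u < t) :
    a * ∫ s in r..u, (t - s) ^ (-a - 1) * (s - r) ^ (a - 1) =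
      (t - u) ^ (-a) * (u - r) ^ a / (t - r) := by
  have htr : 0 < t - r := by linarith
  have hcont : ContinuousOn (fun x => (t - x) ^ (-a) * (x - r) ^ a) (Icc r u) := by
    refine ContinuousOn.mul (ContinuousOn.rpow_const (by fun_prop) fun s hs => Or.inl ?_)
      (ContinuousOn.rpow_const (by fun_prop) fun _ _ => Or.inr ha.le)
    exact (sub_pos.2 (hs.2.trans_lt hut)).ne'
  have hFTC := intervalIntegral.integral_eq_sub_of_hasDerivAt_of_le hru hcont
    (fun s hs => hasDerivAt_rpow_neg_mul_rpow hs.1 (hs.2.trans hut))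
    ((intervalIntegrable_rpow_sub_mul_rpow_sub (by linarith) hru hut).const_mul (a * (t - r)))
  rw [intervalIntegral.integral_const_mul, sub_self, zero_rpow ha.ne', mul_zero, sub_zero]
    at hFTC
  rw [← hFTC]
  field_simp

end Real

/-- The kernel identity: for `r < t₂ < t`,
`(H + 1/2) ∫_r^{t₂} (t-s)^{-H-3/2} (s-r)^{H-1/2} ds
  = (t-t₂)^{-H-1/2} (t₂-r)^{H-1/2} - (t-t₂)^{1/2-H} (t₂-r)^{H-1/2} / (t-r)`. -/
theorem stmt11 (H r t₂ t : ℝ) (hH : H ∈ Set.Ioo (0 : ℝ) 1) (hr : r < t₂) (ht : t₂ < t) :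
    (H + 1 / 2) * ∫ s in r..t₂, (t - s) ^ (-H - 3 / 2) * (s - r) ^ (H - 1 / 2) =
      (t - t₂) ^ (-H - 1 / 2) * (t₂ - r) ^ (H - 1 / 2) -
        (t - t₂) ^ (1 / 2 - H) * (t₂ - r) ^ (H - 1 / 2) / (t - r) := by
  have htt₂ : t - t₂ ≠ 0 := (sub_pos.2 ht).ne'
  have ht₂r : t₂ - r ≠ 0 := (sub_pos.2 hr).ne'
  have htr : t - r ≠ 0 := (sub_pos.2 (hr.trans ht)).ne'
  rw [show -H - 3 / 2 = -(H + 1 / 2) - 1 by ring, show H - 1 / 2 = H + 1 / 2 - 1 by ring,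
    show -H - 1 / 2 = -(H + 1 / 2) by ring, show 1 / 2 - H = -(H + 1 / 2) + 1 by ring,
    Real.integral_rpow_sub_mul_rpow_sub (by linarith [hH.1]) hr.le ht]
  generalize H + 1 / 2 = a
  rw [Real.rpow_add_one htt₂, Real.rpow_sub_one ht₂r]
  field_simp
  ring
end

section
/- Let n ≥ 1, let f : ℝⁿ → ℝⁿ be continuous and satisfy ⟨f(y) − f(x), y − x⟩ ≤ C₄‖y−x‖ − C₂‖y−x‖² for all x, y ∈ ℝⁿ, for some constants C₂, C₄ > 0. Let T > 0, let b : [0,T] → ℝⁿ be continuous, and suppose x, y : [0,T] → ℝⁿ are continuous and satisfy x(t) = x₀ + b(t) + ∫₀^t f(x(s)) ds and y(t) = y₀ + b(t) + ∫₀^t f(y(s)) ds for all t ∈ [0,T] (the same forcing b for both). Then for all t ∈ [0,T]: ‖y(t) − x(t)‖ ≤ ‖y₀ − x₀‖ e^{−C₂ t} + (C₄/C₂)(1 − e^{−C₂ t}). -/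
/-!
The difference `g = y - x` does not see the forcing `b`: it is differentiable with
`g' = f(y) - f(x)`. Where `g ≠ 0`, `‖g‖' = ⟪g, g'⟫ / ‖g‖ ≤ C₄ - C₂ ‖g‖`, and at a zero of `g`
the right Dini derivative of `‖g‖` is `0 ≤ C₄`. Gronwall's inequality for right Dini
derivatives then bounds `‖g‖` by the solution of `u' = C₄ - C₂ u`, `u(0) = ‖y₀ - x₀‖`.
-/

open Filter Set Topology
open scoped RealInnerProductSpace

section InnerProductSpace

variable {F : Type*} [NormedAddCommGroup F] [InnerProductSpace ℝ F]

theorem HasDerivWithinAt.norm_of_ne_zero {g : ℝ → F} {g' : F} {s : Set ℝ} {t : ℝ}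
    (hg : HasDerivWithinAt g g' s t) (h0 : g t ≠ 0) :
    HasDerivWithinAt (fun z ↦ ‖g z‖) (⟪g t, g'⟫ / ‖g t‖) s t := by
  have hsq : ‖g t‖ ^ 2 ≠ 0 := pow_ne_zero 2 (norm_ne_zero_iff.2 h0)
  convert hg.norm_sq.sqrt hsq using 1
  · simp only [Real.sqrt_sq (norm_nonneg _)]
  · rw [Real.sqrt_sq (norm_nonneg _)]
    field_simp

theorem norm_le_gronwallBound_of_inner_deriv_right_le {g g' : ℝ → F} {δ K ε a b : ℝ}
    (hg : ContinuousOn g (Icc a b)) (hg' : ∀ t ∈ Ico a b, HasDerivWithinAt g (g' t) (Ici t) t)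
    (ha : ‖g a‖ ≤ δ) (bound : ∀ t ∈ Ico a b, ⟪g t, g' t⟫ ≤ K * ‖g t‖ ^ 2 + ε * ‖g t‖)
    (bound_zero : ∀ t ∈ Ico a b, g t = 0 → ‖g' t‖ ≤ ε) :
    ∀ t ∈ Icc a b, ‖g t‖ ≤ gronwallBound δ K ε (t - a) := by
  refine le_gronwallBound_of_liminf_deriv_right_le (f' := fun t ↦ K * ‖g t‖ + ε)
    hg.norm (fun t ht r hr ↦ ?_) ha fun _ _ ↦ le_rfl
  by_cases h0 : g t = 0
  · refine (hg' t ht).liminf_right_slope_norm_le ((bound_zero t ht h0).trans_lt ?_)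
    simpa [h0] using hr
  · have hinner : ⟪g t, g' t⟫ / ‖g t‖ ≤ K * ‖g t‖ + ε :=
      (div_le_iff₀ (norm_pos_iff.2 h0)).2 ((bound t ht).trans_eq (by ring))
    exact ((hg' t ht).norm_of_ne_zero h0).liminf_right_slope_le (hinner.trans_lt hr)

end InnerProductSpace

theorem hasDerivWithinAt_Ici_of_eqOn_add_integral {E : Type*} [NormedAddCommGroup E]
    [NormedSpace ℝ E] [CompleteSpace E] {g G : ℝ → E} {c : E} {a b t : ℝ}
    (hG : ContinuousOn G (Icc a b)) (hg : ∀ s ∈ Icc a b, g s = c + ∫ r in a..s, G r)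
    (ht : t ∈ Ico a b) : HasDerivWithinAt g (G t) (Ici t) t := by
  have hIci : Icc a b ∈ 𝓝[≥] t := Icc_mem_nhdsGE_of_mem ht
  have hIoi : Icc a b ∈ 𝓝[>] t := nhdsWithin_mono t Ioi_subset_Ici_self hIci
  have hderiv : HasDerivWithinAt (fun s ↦ ∫ r in a..s, G r) (G t) (Ici t) t :=
    intervalIntegral.integral_hasDerivWithinAt_right
      ((hG.mono (Icc_subset_Icc_right ht.2.le)).intervalIntegrable_of_Icc ht.1)
      ((hG.stronglyMeasurableAtFilter_nhdsWithin measurableSet_Icc t).filter_mono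
        (nhdsWithin_le_of_mem hIoi))
      ((hG t (Ico_subset_Icc_self ht)).mono_of_mem_nhdsWithin hIoi)
  exact (hderiv.const_add c).congr_of_eventuallyEq (eventually_of_mem hIci hg)
    (hg t (Ico_subset_Icc_self ht))

theorem stmt18_general (n : ℕ)
    (f : EuclideanSpace ℝ (Fin n) → EuclideanSpace ℝ (Fin n)) (hf : Continuous f)
    (C₂ C₄ : ℝ) (hC₂ : 0 < C₂) (hC₄ : 0 < C₄)
    (hmono : ∀ x y : EuclideanSpace ℝ (Fin n),
      ⟪f y - f x, y - x⟫ ≤ C₄ * ‖y - x‖ - C₂ * ‖y - x‖ ^ 2)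
    (T : ℝ)
    (b x y : ℝ → EuclideanSpace ℝ (Fin n)) (x₀ y₀ : EuclideanSpace ℝ (Fin n))
    (hx : ContinuousOn x (Set.Icc 0 T))
    (hy : ContinuousOn y (Set.Icc 0 T))
    (hxeq : ∀ t ∈ Set.Icc (0 : ℝ) T, x t = x₀ + b t + ∫ s in (0 : ℝ)..t, f (x s))
    (hyeq : ∀ t ∈ Set.Icc (0 : ℝ) T, y t = y₀ + b t + ∫ s in (0 : ℝ)..t, f (y s)) :
    ∀ t ∈ Set.Icc (0 : ℝ) T,
      ‖y t - x t‖ ≤ ‖y₀ - x₀‖ * Real.exp (-C₂ * t) +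
        (C₄ / C₂) * (1 - Real.exp (-C₂ * t)) := by
  intro t ht
  have hfx : ContinuousOn (fun s ↦ f (x s)) (Icc 0 T) := hf.comp_continuousOn hx
  have hfy : ContinuousOn (fun s ↦ f (y s)) (Icc 0 T) := hf.comp_continuousOn hy
  have hdiff : ∀ s ∈ Icc (0 : ℝ) T,
      y s - x s = (y₀ - x₀) + ∫ r in (0 : ℝ)..s, (f (y r) - f (x r)) := by
    intro s hs
    have hsub : uIcc 0 s ⊆ Icc 0 T := uIcc_subset_Icc ⟨le_rfl, hs.1.trans hs.2⟩ hs
    rw [hyeq s hs, hxeq s hs, intervalIntegral.integral_sub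
      (hfy.mono hsub).intervalIntegrable (hfx.mono hsub).intervalIntegrable]
    abel
  have hinit : y 0 - x 0 = y₀ - x₀ := by simpa using hdiff 0 ⟨le_rfl, ht.1.trans ht.2⟩
  have key := norm_le_gronwallBound_of_inner_deriv_right_le
    (g' := fun s ↦ f (y s) - f (x s)) (δ := ‖y₀ - x₀‖) (K := -C₂) (ε := C₄) (hy.sub hx)
    (fun s hs ↦ hasDerivWithinAt_Ici_of_eqOn_add_integral (hfy.sub hfx) hdiff hs)
    (by rw [Pi.sub_apply, hinit])
    (fun s _ ↦ by
      rw [Pi.sub_apply, real_inner_comm]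
      linarith [hmono (x s) (y s)])
    (fun s _ hs ↦ by
      rw [Pi.sub_apply, sub_eq_zero] at hs
      simp [hs, hC₄.le]) t ht
  rw [gronwallBound_of_K_ne_0 (neg_ne_zero.2 hC₂.ne'), sub_zero] at key
  refine key.trans_eq ?_
  beta_reduce
  rw [div_neg]
  ring

/-- Gronwall estimate for two solutions driven by the same forcing: if
`⟨f(y)-f(x), y-x⟩ ≤ C₄‖y-x‖ - C₂‖y-x‖²` and `x, y` solve the integral equations
`x(t) = x₀ + b(t) + ∫₀ᵗ f(x(s)) ds`, `y(t) = y₀ + b(t) + ∫₀ᵗ f(y(s)) ds`, then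
`‖y(t) - x(t)‖ ≤ ‖y₀ - x₀‖ e^{-C₂ t} + (C₄/C₂)(1 - e^{-C₂ t})` on `[0,T]`. -/
theorem stmt18 (n : ℕ) (hn : 1 ≤ n)
    (f : EuclideanSpace ℝ (Fin n) → EuclideanSpace ℝ (Fin n)) (hf : Continuous f)
    (C₂ C₄ : ℝ) (hC₂ : 0 < C₂) (hC₄ : 0 < C₄)
    (hmono : ∀ x y : EuclideanSpace ℝ (Fin n),
      ⟪f y - f x, y - x⟫ ≤ C₄ * ‖y - x‖ - C₂ * ‖y - x‖ ^ 2)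
    (T : ℝ) (hT : 0 < T)
    (b x y : ℝ → EuclideanSpace ℝ (Fin n)) (x₀ y₀ : EuclideanSpace ℝ (Fin n))
    (hb : ContinuousOn b (Set.Icc 0 T))
    (hx : ContinuousOn x (Set.Icc 0 T))
    (hy : ContinuousOn y (Set.Icc 0 T))
    (hxeq : ∀ t ∈ Set.Icc (0 : ℝ) T, x t = x₀ + b t + ∫ s in (0 : ℝ)..t, f (x s))
    (hyeq : ∀ t ∈ Set.Icc (0 : ℝ) T, y t = y₀ + b t + ∫ s in (0 : ℝ)..t, f (y s)) :
    ∀ t ∈ Set.Icc (0 : ℝ) T,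
      ‖y t - x t‖ ≤ ‖y₀ - x₀‖ * Real.exp (-C₂ * t) +
        (C₄ / C₂) * (1 - Real.exp (-C₂ * t)) :=
  stmt18_general n f hf C₂ C₄ hC₂ hC₄ hmono T b x y x₀ y₀ hx hy hxeq hyeq
end

section
/- Let n ≥ 1, let f : ℝⁿ → ℝⁿ be continuous and satisfy the one-sided Lipschitz condition ⟨f(a) − f(b), a − b⟩ ≤ C₃‖a−b‖² for all a, b ∈ ℝⁿ with some constant C₃ > 0, and let κ₂ > 0. Let T > 0, let x : [0,T] → ℝⁿ be continuous, and suppose ρ : [0,T] → ℝⁿ is continuous and satisfies ρ(t) = ρ₀ + ∫₀^t [ f(x(s) + ρ(s)) − f(x(s)) − C₃ ρ(s) − κ₂ ρ(s)/√‖ρ(s)‖ ] ds for all t ∈ [0,T], where the term ρ(s)/√‖ρ(s)‖ is interpreted as 0 when ρ(s) = 0. Then ‖ρ(t)‖ ≤ (√‖ρ₀‖ − κ₂ t/2)² for all t ∈ [0, T] with t ≤ 2√‖ρ₀‖/κ₂, and ρ(t) = 0 for all t ∈ [0,T] with t ≥ 2√‖ρ₀‖/κ₂. -/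
open MeasureTheory Set
open scoped RealInnerProductSpace

/-! Put `φ = ‖ρ‖²`. The integral equation makes `ρ` right-differentiable with derivative the
integrand, and the one-sided Lipschitz condition cancels the `C₃` terms, so
`φ' = 2⟪ρ, ρ'⟫ ≤ -2κ₂ ‖ρ‖^{3/2} = -2κ₂ φ^{3/4}`. The function `(√‖ρ₀‖ - κ₂ t/2)⁴` solves
`ψ' = -2κ₂ ψ^{3/4}` with the same initial value; comparing `φ` with it plus `ε t` (which makes the
comparison strict) and letting `ε → 0` gives the bound up to `t₀ = 2√‖ρ₀‖/κ₂`, where `φ` vanishes.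
After `t₀`, `φ' ≤ 0` and `φ ≥ 0` keep `φ` at zero. -/

theorem continuous_norm_rpow_smul {E : Type*} [NormedAddCommGroup E] [NormedSpace ℝ E]
    {p : ℝ} (hp : -1 < p) : Continuous fun y : E => ‖y‖ ^ p • y := by
  refine continuous_iff_continuousAt.2 fun y => ?_
  rcases eq_or_ne y 0 with rfl | hy
  · have hnorm : ∀ z : E, ‖‖z‖ ^ p • z‖ = ‖z‖ ^ (p + 1) := fun z => by
      rw [norm_smul, Real.norm_of_nonneg (by positivity),
        Real.rpow_add_one' (norm_nonneg z) (by linarith)]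
    have hlim : Filter.Tendsto (fun z : E => ‖z‖ ^ (p + 1)) (nhds 0) (nhds 0) := by
      simpa [Real.zero_rpow (by linarith : p + 1 ≠ 0)] using
        (continuous_norm.rpow_const (p := p + 1) fun _ => Or.inr (by linarith)).tendsto
          (0 : E)
    simpa [ContinuousAt, Real.zero_rpow] using
      squeeze_zero_norm (fun z => (hnorm z).le) hlim
  · exact ((Real.continuousAt_rpow_const _ _ (Or.inl (norm_ne_zero_iff.2 hy))).comp
      continuous_norm.continuousAt).smul continuousAt_id

theorem rpow_neg_half_mul_sq {r : ℝ} (hr : 0 ≤ r) :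
    r ^ (-(1 : ℝ) / 2) * r ^ 2 = r ^ ((3 : ℝ) / 2) := by
  rw [← Real.rpow_two, ← Real.rpow_add' hr (by norm_num)]
  norm_num

theorem inner_binding_drift_le {F : Type*} [NormedAddCommGroup F] [InnerProductSpace ℝ F]
    {f : F → F} {C : ℝ} (hOS : ∀ a b, ⟪f a - f b, a - b⟫ ≤ C * ‖a - b‖ ^ 2) (κ : ℝ) (x r : F) :
    ⟪r, f (x + r) - f x - C • r - (κ * ‖r‖ ^ (-(1 : ℝ) / 2)) • r⟫ ≤ -κ * ‖r‖ ^ ((3 : ℝ) / 2) := by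
  have hr : ⟪r, f (x + r) - f x⟫ ≤ C * ‖r‖ ^ 2 := by
    simpa [real_inner_comm] using hOS (x + r) x
  rw [inner_sub_right, inner_sub_right, real_inner_smul_right, real_inner_smul_right,
    real_inner_self_eq_norm_sq, mul_assoc, rpow_neg_half_mul_sq (norm_nonneg r)]
  linarith

theorem sq_rpow_three_fourths {r : ℝ} (hr : 0 ≤ r) :
    (r ^ 2) ^ ((3 : ℝ) / 4) = r ^ ((3 : ℝ) / 2) := by
  rw [← Real.rpow_two, ← Real.rpow_mul hr]
  norm_num

theorem exists_continuous_eqOn_Icc {E : Type*} [TopologicalSpace E] {a b : ℝ} (hab : a ≤ b)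
    {h : ℝ → E} (hh : ContinuousOn h (Icc a b)) :
    ∃ H : ℝ → E, Continuous H ∧ EqOn H h (Icc a b) :=
  ⟨IccExtend hab ((Icc a b).domRestrict h), hh.domRestrict.Icc_extend',
    fun _ ht => IccExtend_of_mem hab _ ht⟩

theorem hasDerivWithinAt_Ici_of_eq_add_integral {E : Type*} [NormedAddCommGroup E]
    [NormedSpace ℝ E] [CompleteSpace E] {ρ h : ℝ → E} {ρ₀ : E} {a b : ℝ}
    (hh : ContinuousOn h (Icc a b)) (hρ : ∀ t ∈ Icc a b, ρ t = ρ₀ + ∫ s in a..t, h s) :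
    ∀ t ∈ Ico a b, HasDerivWithinAt ρ (h t) (Ici t) t := by
  intro t ht
  obtain ⟨H, hHc, hHh⟩ := exists_continuous_eqOn_Icc (ht.1.trans ht.2.le) hh
  have hρH : EqOn ρ (fun u => ρ₀ + ∫ s in a..u, H s) (Icc a b) := fun u hu => by
    rw [hρ u hu, intervalIntegral.integral_congr fun s hs => (hHh ?_).symm]
    rw [uIcc_of_le hu.1] at hs
    exact ⟨hs.1, hs.2.trans hu.2⟩
  have hderiv : HasDerivAt (fun u => ρ₀ + ∫ s in a..u, H s) (H t) t :=
    (intervalIntegral.integral_hasDerivAt_right (hHc.intervalIntegrable _ _)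
      (hHc.stronglyMeasurableAtFilter _ _) hHc.continuousAt).const_add ρ₀
  rw [← hHh (Ico_subset_Icc_self ht)]
  exact (hderiv.hasDerivWithinAt.congr hρH (hρH (Ico_subset_Icc_self ht))).mono_of_mem_nhdsWithin
    (Icc_mem_nhdsGE_of_mem ht)

theorem le_pow_four_of_hasDerivWithinAt_le_add {φ φ' : ℝ → ℝ} {κ c b ε : ℝ}
    (hκ : 0 ≤ κ) (hε : 0 < ε) (hφ : ContinuousOn φ (Icc 0 b))
    (hφ' : ∀ t ∈ Ico 0 b, HasDerivWithinAt φ (φ' t) (Ici t) t)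
    (hbound : ∀ t ∈ Ico 0 b, φ' t ≤ -(2 * κ) * φ t ^ ((3 : ℝ) / 4))
    (h0 : φ 0 ≤ c ^ 4) (hb : κ * b / 2 ≤ c) :
    ∀ t ∈ Icc 0 b, φ t ≤ (c - κ * t / 2) ^ 4 + ε * t := by
  have hB : ∀ t, HasDerivAt (fun t => (c - κ * t / 2) ^ 4 + ε * t)
      (-(2 * κ) * (c - κ * t / 2) ^ 3 + ε) t := fun t => by
    have hlin : HasDerivAt (fun t => c - κ * t / 2) (-(κ / 2)) t := by
      simpa using (((hasDerivAt_id' t).const_mul κ).div_const 2).const_sub c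
    exact ((hlin.fun_pow 4).add ((hasDerivAt_id' t).const_mul ε)).congr_deriv (by ring)
  refine image_le_of_deriv_right_lt_deriv_boundary hφ hφ' (by simpa using h0) hB ?_
  intro t ht hφt
  have hy : 0 ≤ c - κ * t / 2 := by nlinarith [ht.2]
  have hyφ : (c - κ * t / 2) ^ 4 ≤ φ t := by nlinarith [ht.1]
  have hy3 : (c - κ * t / 2) ^ 3 ≤ φ t ^ ((3 : ℝ) / 4) := by
    calc (c - κ * t / 2) ^ 3 = ((c - κ * t / 2) ^ 4) ^ ((3 : ℝ) / 4) := by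
          rw [← Real.rpow_natCast, ← Real.rpow_natCast, ← Real.rpow_mul hy]; norm_num
      _ ≤ φ t ^ ((3 : ℝ) / 4) := by gcongr
  nlinarith [hbound t ht]

theorem le_pow_four_of_hasDerivWithinAt_le {φ φ' : ℝ → ℝ} {κ c b : ℝ}
    (hκ : 0 ≤ κ) (hφ : ContinuousOn φ (Icc 0 b))
    (hφ' : ∀ t ∈ Ico 0 b, HasDerivWithinAt φ (φ' t) (Ici t) t)
    (hbound : ∀ t ∈ Ico 0 b, φ' t ≤ -(2 * κ) * φ t ^ ((3 : ℝ) / 4))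
    (h0 : φ 0 ≤ c ^ 4) (hb : κ * b / 2 ≤ c) :
    ∀ t ∈ Icc 0 b, φ t ≤ (c - κ * t / 2) ^ 4 := by
  intro t ht
  have hlim : Filter.Tendsto (fun ε => (c - κ * t / 2) ^ 4 + ε * t) (nhdsWithin 0 (Ioi 0))
      (nhds ((c - κ * t / 2) ^ 4)) := by
    refine (Continuous.tendsto' ?_ 0 _ (by simp)).mono_left nhdsWithin_le_nhds
    fun_prop
  exact ge_of_tendsto hlim (eventually_nhdsWithin_of_forall fun ε hε =>
    le_pow_four_of_hasDerivWithinAt_le_add hκ hε hφ hφ' hbound h0 hb t ht)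

theorem nonpos_of_hasDerivWithinAt_nonpos {φ φ' : ℝ → ℝ} {a b : ℝ}
    (hφ : ContinuousOn φ (Icc a b)) (hφ' : ∀ t ∈ Ico a b, HasDerivWithinAt φ (φ' t) (Ici t) t)
    (hbound : ∀ t ∈ Ico a b, φ' t ≤ 0) (ha : φ a ≤ 0) : ∀ t ∈ Icc a b, φ t ≤ 0 :=
  image_le_of_deriv_right_le_deriv_boundary hφ hφ' ha continuousOn_const
    (fun t _ => hasDerivWithinAt_const t _ 0) hbound

section Extinction

variable {E : Type*} [NormedAddCommGroup E] [InnerProductSpace ℝ E] {ρ g : ℝ → E} {κ T : ℝ}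

theorem sq_norm_le_pow_four_of_inner_deriv_le (hκ : 0 ≤ κ) (hρ : ContinuousOn ρ (Icc 0 T))
    (hρ' : ∀ t ∈ Ico 0 T, HasDerivWithinAt ρ (g t) (Ici t) t)
    (hinner : ∀ t ∈ Ico 0 T, ⟪ρ t, g t⟫ ≤ -κ * ‖ρ t‖ ^ ((3 : ℝ) / 2))
    {b : ℝ} (hbT : b ≤ T) (hb : κ * b / 2 ≤ √‖ρ 0‖) :
    ∀ t ∈ Icc 0 b, ‖ρ t‖ ^ 2 ≤ (√‖ρ 0‖ - κ * t / 2) ^ 4 := by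
  have hsub : Ico 0 b ⊆ Ico 0 T := Ico_subset_Ico_right hbT
  refine le_pow_four_of_hasDerivWithinAt_le hκ
    ((hρ.norm.pow 2).mono (Icc_subset_Icc_right hbT))
    (fun t ht => (hρ' t (hsub ht)).norm_sq) (fun t ht => ?_) ?_ hb
  · rw [sq_rpow_three_fourths (norm_nonneg _)]
    linarith [hinner t (hsub ht)]
  · rw [show (4 : ℕ) = 2 * 2 from rfl, pow_mul, Real.sq_sqrt (norm_nonneg _)]

theorem norm_le_sq_of_inner_deriv_le (hκ : 0 ≤ κ) (hρ : ContinuousOn ρ (Icc 0 T))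
    (hρ' : ∀ t ∈ Ico 0 T, HasDerivWithinAt ρ (g t) (Ici t) t)
    (hinner : ∀ t ∈ Ico 0 T, ⟪ρ t, g t⟫ ≤ -κ * ‖ρ t‖ ^ ((3 : ℝ) / 2))
    {t : ℝ} (ht : t ∈ Icc 0 T) (hκt : κ * t / 2 ≤ √‖ρ 0‖) :
    ‖ρ t‖ ≤ (√‖ρ 0‖ - κ * t / 2) ^ 2 := by
  have hsq := sq_norm_le_pow_four_of_inner_deriv_le hκ hρ hρ' hinner ht.2 hκt t ⟨ht.1, le_rfl⟩
  rw [show (4 : ℕ) = 2 * 2 from rfl, pow_mul] at hsq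
  exact (pow_le_pow_iff_left₀ (norm_nonneg _) (sq_nonneg _) two_ne_zero).1 hsq

theorem eq_zero_of_inner_deriv_le (hκ : 0 < κ) (hρ : ContinuousOn ρ (Icc 0 T))
    (hρ' : ∀ t ∈ Ico 0 T, HasDerivWithinAt ρ (g t) (Ici t) t)
    (hinner : ∀ t ∈ Ico 0 T, ⟪ρ t, g t⟫ ≤ -κ * ‖ρ t‖ ^ ((3 : ℝ) / 2))
    {t : ℝ} (ht : t ∈ Icc 0 T) (hκt : 2 * √‖ρ 0‖ / κ ≤ t) : ρ t = 0 := by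
  set t₀ := 2 * √‖ρ 0‖ / κ
  have hκt₀ : κ * t₀ / 2 = √‖ρ 0‖ := by simp only [t₀]; field_simp
  have ht₀ : 0 ≤ t₀ := by positivity
  have hsq₀ : ‖ρ t₀‖ ^ 2 ≤ 0 := by
    simpa [hκt₀] using sq_norm_le_pow_four_of_inner_deriv_le hκ.le hρ hρ' hinner (hκt.trans ht.2) hκt₀.le t₀
      ⟨ht₀, le_rfl⟩
  have hsub : Icc t₀ t ⊆ Icc 0 T := Icc_subset_Icc ht₀ ht.2
  have hsq : ‖ρ t‖ ^ 2 ≤ 0 := by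
    refine nonpos_of_hasDerivWithinAt_nonpos ((hρ.norm.pow 2).mono hsub)
      (fun s hs => (hρ' s ⟨ht₀.trans hs.1, hs.2.trans_le ht.2⟩).norm_sq) (fun s hs => ?_) hsq₀
      t ⟨hκt, le_rfl⟩
    have hs_inner := hinner s ⟨ht₀.trans hs.1, hs.2.trans_le ht.2⟩
    have hs_decay : 0 ≤ κ * ‖ρ s‖ ^ ((3 : ℝ) / 2) := by positivity
    linarith
  simpa using hsq

end Extinction

theorem stmt19_general (n : ℕ)
    (f : EuclideanSpace ℝ (Fin n) → EuclideanSpace ℝ (Fin n)) (hf : Continuous f)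
    (C₃ κ₂ : ℝ) (hκ₂ : 0 < κ₂)
    (hOS : ∀ a b : EuclideanSpace ℝ (Fin n), ⟪f a - f b, a - b⟫ ≤ C₃ * ‖a - b‖ ^ 2)
    (T : ℝ)
    (x ρ : ℝ → EuclideanSpace ℝ (Fin n)) (ρ₀ : EuclideanSpace ℝ (Fin n))
    (hx : ContinuousOn x (Set.Icc 0 T))
    (hρ : ContinuousOn ρ (Set.Icc 0 T))
    (hρeq : ∀ t ∈ Set.Icc (0 : ℝ) T,
      ρ t = ρ₀ + ∫ s in (0 : ℝ)..t,
        (f (x s + ρ s) - f (x s) - C₃ • ρ s - (κ₂ * ‖ρ s‖ ^ (-(1 : ℝ) / 2)) • ρ s)) :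
    ∀ t ∈ Set.Icc (0 : ℝ) T,
      (t ≤ 2 * Real.sqrt ‖ρ₀‖ / κ₂ →
        ‖ρ t‖ ≤ (Real.sqrt ‖ρ₀‖ - κ₂ * t / 2) ^ 2) ∧
      (2 * Real.sqrt ‖ρ₀‖ / κ₂ ≤ t → ρ t = 0) := by
  have hdrift : ContinuousOn (fun s => f (x s + ρ s) - f (x s) - C₃ • ρ s -
      (κ₂ * ‖ρ s‖ ^ (-(1 : ℝ) / 2)) • ρ s) (Icc 0 T) := by
    have hsing : ContinuousOn (fun s => (κ₂ * ‖ρ s‖ ^ (-(1 : ℝ) / 2)) • ρ s) (Icc 0 T) := by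
      simp_rw [mul_smul]
      exact ((continuous_norm_rpow_smul (by norm_num)).const_smul κ₂).comp_continuousOn hρ
    exact (((hf.comp_continuousOn (hx.add hρ)).sub (hf.comp_continuousOn hx)).sub
      (hρ.const_smul C₃)).sub hsing
  have hρ' := hasDerivWithinAt_Ici_of_eq_add_integral hdrift hρeq
  have hinner := fun t (_ : t ∈ Ico (0 : ℝ) T) => inner_binding_drift_le hOS κ₂ (x t) (ρ t)
  intro t ht
  obtain rfl : ρ 0 = ρ₀ := by simpa using hρeq 0 ⟨le_rfl, ht.1.trans ht.2⟩
  refine ⟨fun hle => norm_le_sq_of_inner_deriv_le hκ₂.le hρ hρ' hinner ht ?_,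
    eq_zero_of_inner_deriv_le hκ₂ hρ hρ' hinner ht⟩
  rw [le_div_iff₀ hκ₂] at hle
  linarith

/-- The binding construction estimate: if `ρ` solves
`ρ(t) = ρ₀ + ∫₀ᵗ [f(x(s)+ρ(s)) - f(x(s)) - C₃ ρ(s) - κ₂ ρ(s)/√‖ρ(s)‖] ds`
(with `ρ/√‖ρ‖ := 0` when `ρ = 0`, which is automatic for `‖ρ‖^{-1/2} := 0^{-1/2} = 0`),
then `‖ρ(t)‖ ≤ (√‖ρ₀‖ - κ₂ t/2)²` for `t ≤ 2√‖ρ₀‖/κ₂` and `ρ(t) = 0` for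
`t ≥ 2√‖ρ₀‖/κ₂`. -/
theorem stmt19 (n : ℕ) (hn : 1 ≤ n)
    (f : EuclideanSpace ℝ (Fin n) → EuclideanSpace ℝ (Fin n)) (hf : Continuous f)
    (C₃ κ₂ : ℝ) (hC₃ : 0 < C₃) (hκ₂ : 0 < κ₂)
    (hOS : ∀ a b : EuclideanSpace ℝ (Fin n), ⟪f a - f b, a - b⟫ ≤ C₃ * ‖a - b‖ ^ 2)
    (T : ℝ) (hT : 0 < T)
    (x ρ : ℝ → EuclideanSpace ℝ (Fin n)) (ρ₀ : EuclideanSpace ℝ (Fin n))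
    (hx : ContinuousOn x (Set.Icc 0 T))
    (hρ : ContinuousOn ρ (Set.Icc 0 T))
    (hρeq : ∀ t ∈ Set.Icc (0 : ℝ) T,
      ρ t = ρ₀ + ∫ s in (0 : ℝ)..t,
        (f (x s + ρ s) - f (x s) - C₃ • ρ s - (κ₂ * ‖ρ s‖ ^ (-(1 : ℝ) / 2)) • ρ s)) :
    ∀ t ∈ Set.Icc (0 : ℝ) T,
      (t ≤ 2 * Real.sqrt ‖ρ₀‖ / κ₂ →
        ‖ρ t‖ ≤ (Real.sqrt ‖ρ₀‖ - κ₂ * t / 2) ^ 2) ∧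
      (2 * Real.sqrt ‖ρ₀‖ / κ₂ ≤ t → ρ t = 0) :=
  stmt19_general n f hf C₃ κ₂ hκ₂ hOS T x ρ ρ₀ hx hρ hρeq
end
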